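/- arXiv:1610.09721 — 8 statements merged into one kernel-verified Lean document; each statement's English description precedes it below -/
import Mathlib

section
/- For every ℓ ≥ 2, the Lee monoid L_ℓ^1 satisfies Property (C_ℓ): if L_ℓ^1 satisfies an identity u ≈ v where u is a word over the two-letter alphabet {x,y} containing both x and y and the height of u (the number of maximal blocks of a single letter, i.e. islands) is at most ℓ, then v has the same type as u. -/
/-- Two words have the same type. -/
def SameType {α : Type*} (u v : List α) : Prop :=
  ∃ L : List (α × ℕ × ℕ),
    (∀ p ∈ L, 0 < p.2.1 ∧ 0 < p.2.2) ∧
    List.Chain' (fun p q => p.1 ≠ q.1) L ∧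
    u = L.flatMap (fun p => List.replicate p.2.1 p.1) ∧
    v = L.flatMap (fun p => List.replicate p.2.2 p.1)

/-- The height of a word: the number of islands (maximal one-letter power factors). -/
def height {α : Type*} [DecidableEq α] (u : List α) : ℕ :=
  (u.destutter (· ≠ ·)).length

/-- The alternating word abab⋯ of length ℓ (a = 0, b = 1 in `Fin 3`). -/
def altWord (ℓ : ℕ) : FreeMonoid (Fin 3) :=
  FreeMonoid.ofList ((List.range ℓ).map (fun i => if i % 2 = 0 then (0 : Fin 3) else 1))

/-- Defining relations of the Lee monoid L_ℓ^1: generators a = 0, b = 1, zero = 2,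
relations aa = a, bb = b, abab⋯ (length ℓ) = 0, and 0 is absorbing. -/
def leeRel (ℓ : ℕ) : FreeMonoid (Fin 3) → FreeMonoid (Fin 3) → Prop := fun u v =>
  (u = .of 0 * .of 0 ∧ v = .of 0) ∨
  (u = .of 1 * .of 1 ∧ v = .of 1) ∨
  (u = altWord ℓ ∧ v = .of 2) ∨
  (u = .of 2 * .of 0 ∧ v = .of 2) ∨
  (u = .of 0 * .of 2 ∧ v = .of 2) ∨
  (u = .of 2 * .of 1 ∧ v = .of 2) ∨
  (u = .of 1 * .of 2 ∧ v = .of 2) ∨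
  (u = .of 2 * .of 2 ∧ v = .of 2)

/-- The Lee monoid L_ℓ^1 (with adjoined identity 1, the empty word). -/
def Lee (ℓ : ℕ) : Type := (conGen (leeRel ℓ)).Quotient

instance (ℓ : ℕ) : Monoid (Lee ℓ) := Con.monoid _

/-- A monoid satisfies the identity u ≈ v (words in countably many variables). -/
def SatM (M : Type*) [Monoid M] (u v : List ℕ) : Prop :=
  ∀ θ : ℕ → M, (u.map θ).prod = (v.map θ).prod

/-!
Sending the letters of `u` to `1` and all other variables to `a` shows that `v` has no further
letters. Sending the first letter of `u` to `b` and the other one to `a` turns `u` into an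
alternating word in `a, b` that starts with `b` and has at most `ℓ` islands, so it is not `0` in
`L_ℓ^1`. As `a` and `b` are idempotent, a nonzero product of `a`s and `b`s is determined by its
sequence of islands; hence `u` and `v` have the same sequence of islands, i.e. the same type.
To compute in `L_ℓ^1` we let it act by left multiplication on these normal forms.
-/

namespace List

variable {α β : Type*}

theorem head?_destutter' (R : α → α → Prop) [DecidableRel R] (a : α) :
    ∀ l : List α, (l.destutter' R a).head? = some a
  | [] => rfl
  | b :: l => by
    rw [destutter'_cons]
    split_ifs
    · rfl
    · exact head?_destutter' R a l

theorem head?_destutter (R : α → α → Prop) [DecidableRel R] :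
    ∀ l : List α, (l.destutter R).head? = l.head?
  | [] => rfl
  | a :: l => by rw [destutter_cons', head?_destutter']; rfl

theorem eq_of_map_eq_of_injOn {f : α → β} {s : Set α} (hf : Set.InjOn f s) :
    ∀ {l₁ l₂ : List α}, (∀ a ∈ l₁, a ∈ s) → (∀ a ∈ l₂, a ∈ s) →
      l₁.map f = l₂.map f → l₁ = l₂
  | [], [], _, _, _ => rfl
  | a :: l₁, b :: l₂, h₁, h₂, h => by
    simp only [map_cons, cons.injEq] at h
    rw [hf (h₁ a mem_cons_self) (h₂ b mem_cons_self) h.1,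
      eq_of_map_eq_of_injOn hf (fun c hc => h₁ c (mem_cons_of_mem a hc))
        (fun c hc => h₂ c (mem_cons_of_mem b hc)) h.2]
  | [], _ :: _, _, _, h | _ :: _, [], _, _, h => by simp at h

variable [DecidableEq α]

theorem map_destutter_ne_of_injOn [DecidableEq β] {f : α → β} {s : Set α}
    (hf : Set.InjOn f s) {l : List α} (hl : ∀ a ∈ l, a ∈ s) :
    (l.destutter (· ≠ ·)).map f = (l.map f).destutter (· ≠ ·) :=
  map_destutter fun a ha b hb => (hf.ne_iff (hl a ha) (hl b hb)).symm

theorem destutter_ne_eq_of_injOn [DecidableEq β] {f : α → β} {s : Set α} (hf : Set.InjOn f s)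
    {l₁ l₂ : List α} (h₁ : ∀ a ∈ l₁, a ∈ s) (h₂ : ∀ a ∈ l₂, a ∈ s)
    (h : (l₁.map f).destutter (· ≠ ·) = (l₂.map f).destutter (· ≠ ·)) :
    l₁.destutter (· ≠ ·) = l₂.destutter (· ≠ ·) := by
  refine eq_of_map_eq_of_injOn hf (fun a ha => h₁ a ((destutter_sublist _ l₁).subset ha))
    (fun a ha => h₂ a ((destutter_sublist _ l₂).subset ha)) ?_
  rw [map_destutter_ne_of_injOn hf h₁, map_destutter_ne_of_injOn hf h₂, h]

theorem destutter_ne_cons (c : α) (l : List α) :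
    (c :: l).destutter (· ≠ ·) =
      if l.head? = some c then l.destutter (· ≠ ·) else c :: l.destutter (· ≠ ·) := by
  cases l with
  | nil => simp
  | cons b l =>
    rw [destutter_cons_cons]
    by_cases h : b = c
    · subst h; simp [destutter_cons']
    · simp [Ne.symm h, h, destutter_cons']

theorem destutter_ne_cons_destutter (c : α) (l : List α) :
    (c :: l.destutter (· ≠ ·)).destutter (· ≠ ·) = (c :: l).destutter (· ≠ ·) := by
  rw [destutter_ne_cons, destutter_ne_cons, head?_destutter, destutter_idem]

theorem destutter_ne_replicate_append {a : α} {l : List α} (hl : l.head? ≠ some a) :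
    ∀ {m : ℕ}, 0 < m → (replicate m a ++ l).destutter (· ≠ ·) = a :: l.destutter (· ≠ ·)
  | 1, _ => by rw [replicate_one, singleton_append, destutter_ne_cons, if_neg hl]
  | m + 2, _ => by
    rw [replicate_succ, cons_append, destutter_ne_cons, if_pos (by simp [replicate_succ]),
      destutter_ne_replicate_append hl m.succ_pos]

theorem exists_replicate_append_of_head? {a : α} :
    ∀ {l : List α}, l.head? = some a →
      ∃ m l', 0 < m ∧ l = replicate m a ++ l' ∧ l'.head? ≠ some a
  | [], h => by simp at h
  | b :: l, h => by
    obtain rfl : b = a := by simpa using h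
    by_cases hl : l.head? = some b
    · obtain ⟨m, l', -, rfl, hl'⟩ := exists_replicate_append_of_head? hl
      exact ⟨m + 1, l', m.succ_pos, rfl, hl'⟩
    · exact ⟨1, l, one_pos, rfl, hl⟩

end List

theorem SameType.replicate_append {α : Type*} {u v : List α} (h : SameType u v) {c : α}
    (hu : u.head? ≠ some c) {m k : ℕ} (hm : 0 < m) (hk : 0 < k) :
    SameType (List.replicate m c ++ u) (List.replicate k c ++ v) := by
  obtain ⟨L, hpos, hchain, rfl, rfl⟩ := h
  refine ⟨(c, m, k) :: L, ?_, ?_, rfl, rfl⟩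
  · rintro p (_ | ⟨_, hp⟩)
    exacts [⟨hm, hk⟩, hpos p hp]
  · cases L with
    | nil => exact List.isChain_singleton _
    | cons q L =>
      obtain ⟨n, hn⟩ : ∃ n, q.2.1 = n + 1 :=
        Nat.exists_eq_succ_of_ne_zero (hpos q List.mem_cons_self).1.ne'
      refine List.IsChain.cons_cons (fun hcq => hu ?_) hchain
      simp [hn, List.replicate_succ, ← hcq]

theorem SameType.of_destutter_eq {α : Type*} [DecidableEq α] {u v : List α}
    (h : u.destutter (· ≠ ·) = v.destutter (· ≠ ·)) : SameType u v := by
  generalize hd : v.destutter (· ≠ ·) = d at h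
  induction d generalizing u v with
  | nil =>
    obtain rfl := (List.destutter_eq_nil _).1 h
    obtain rfl := (List.destutter_eq_nil _).1 hd
    exact ⟨[], by simp, List.isChain_nil, rfl, rfl⟩
  | cons c d ih =>
    have head_eq {w : List α} (hw : w.destutter (· ≠ ·) = c :: d) : w.head? = some c := by
      rw [← List.head?_destutter (· ≠ ·), hw]; rfl
    obtain ⟨m, u', hm, rfl, hu'⟩ := List.exists_replicate_append_of_head? (head_eq h)
    obtain ⟨k, v', hk, rfl, hv'⟩ := List.exists_replicate_append_of_head? (head_eq hd)
    rw [List.destutter_ne_replicate_append hu' hm, List.cons.injEq] at h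
    rw [List.destutter_ne_replicate_append hv' hk, List.cons.injEq] at hd
    exact (ih hd.2 h.2).replicate_append hu' hm hk

theorem FreeMonoid.lift_ofList_apply {α β : Type*} (f : α → Function.End β) (w : List α)
    (x : β) : FreeMonoid.lift f (FreeMonoid.ofList w) x = w.foldr f x := by
  induction w with
  | nil => rfl
  | cons c w ih =>
    rw [FreeMonoid.ofList_cons, map_mul, FreeMonoid.lift_eval_of]
    exact congrArg (f c) ih

namespace Lee

/-- Words over `{a, b}` are lists of booleans, with `a = true` and `b = false`. A word with no two
equal adjacent letters is `0` in `L_ℓ^1` iff it contains the factor `abab⋯` of length `ℓ`, i.e.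
iff it is longer than `ℓ`, or has length `ℓ` and starts with `a`. -/
def Vanishes (ℓ : ℕ) (d : List Bool) : Prop :=
  ℓ < d.length ∨ (d.length = ℓ ∧ d.head? = some true)

instance (ℓ : ℕ) : DecidablePred (Vanishes ℓ) := fun _ => by unfold Vanishes; infer_instance

/-- The normal form of a word over `a, b` in `L_ℓ^1`, with `none` standing for `0`. -/
def nf (ℓ : ℕ) (w : List Bool) : Option (List Bool) :=
  if Vanishes ℓ (w.destutter (· ≠ ·)) then none else some (w.destutter (· ≠ ·))

variable {ℓ : ℕ}

theorem nf_nil : nf ℓ [] = some [] := by simp [nf, Vanishes]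

theorem destutter_eq_of_nf_eq_some {w d : List Bool} (h : nf ℓ w = some d) :
    w.destutter (· ≠ ·) = d := by
  unfold nf at h
  split_ifs at h
  exact Option.some.inj h

theorem vanishes_destutter_cons {w : List Bool} (c : Bool)
    (h : Vanishes ℓ (w.destutter (· ≠ ·))) :
    Vanishes ℓ ((c :: w).destutter (· ≠ ·)) := by
  rw [List.destutter_ne_cons]
  split_ifs
  · exact h
  · left
    rcases h with h | ⟨h, -⟩ <;> simp only [List.length_cons] <;> omega

theorem nf_cons (c : Bool) (w : List Bool) :
    nf ℓ (c :: w) = (nf ℓ w).bind fun d => nf ℓ (c :: d) := by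
  by_cases h : Vanishes ℓ (w.destutter (· ≠ ·))
  · simp [nf, h, vanishes_destutter_cons c h]
  · simp [nf, h, List.destutter_ne_cons_destutter]

def act (ℓ : ℕ) (c : Bool) : Function.End (Option (List Bool)) :=
  fun x => x.bind fun d => nf ℓ (c :: d)

theorem act_act (c : Bool) (x : Option (List Bool)) : act ℓ c (act ℓ c x) = act ℓ c x := by
  cases x with
  | none => rfl
  | some d =>
    change (nf ℓ (c :: d)).bind _ = _
    rw [← nf_cons]
    simp [act, nf, List.destutter_ne_cons c (c :: d)]

theorem foldr_act {w : List Bool} (hw : w ≠ []) (x : Option (List Bool)) :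
    w.foldr (act ℓ) x = x.bind fun d => nf ℓ (w ++ d) := by
  induction w with
  | nil => exact absurd rfl hw
  | cons c w ih =>
    rcases eq_or_ne w [] with rfl | hw'
    · rfl
    · change act ℓ c (w.foldr (act ℓ) x) = _
      rw [ih hw']
      cases x with
      | none => rfl
      | some d => exact (nf_cons c (w ++ d)).symm

theorem foldr_act_some_nil (w : List Bool) : w.foldr (act ℓ) (some []) = nf ℓ w := by
  rcases eq_or_ne w [] with rfl | hw
  · exact nf_nil.symm
  · simp [foldr_act hw]

def alternating (ℓ : ℕ) : List Bool := (List.range ℓ).map fun i => decide (i % 2 = 0)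

theorem isChain_alternating : (alternating ℓ).IsChain (· ≠ ·) := by
  cases ℓ with
  | zero => exact List.isChain_nil
  | succ n =>
    rw [alternating, List.isChain_map, List.isChain_range_succ]
    intro m _
    simp only [ne_eq, decide_eq_decide]
    omega

theorem head?_alternating (hℓ : 0 < ℓ) : (alternating ℓ).head? = some true := by
  obtain ⟨n, rfl⟩ := Nat.exists_eq_succ_of_ne_zero hℓ.ne'
  simp [alternating, List.range_succ_eq_map]

theorem nf_alternating_append (hℓ : 0 < ℓ) (d : List Bool) :
    nf ℓ (alternating ℓ ++ d) = none := by
  have hlen : ℓ ≤ ((alternating ℓ ++ d).destutter (· ≠ ·)).length := by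
    simpa [alternating] using
      isChain_alternating.length_le_length_destutter_ne (List.sublist_append_left _ d)
  have hhead : ((alternating ℓ ++ d).destutter (· ≠ ·)).head? = some true := by
    rw [List.head?_destutter, List.head?_append, head?_alternating hℓ]
    rfl
  refine if_pos ?_
  rcases hlen.lt_or_eq with h | h
  · exact Or.inl h
  · exact Or.inr ⟨h.symm, hhead⟩

def enc (c : Bool) : Fin 3 := if c then 0 else 1

theorem altWord_eq : altWord ℓ = FreeMonoid.map enc (FreeMonoid.ofList (alternating ℓ)) := by
  change _ = FreeMonoid.ofList ((alternating ℓ).map enc)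
  rw [altWord, alternating, List.map_map]
  congr 1
  refine List.map_congr_left fun i _ => ?_
  by_cases h : i % 2 = 0 <;> simp [enc, h]

def rep (ℓ : ℕ) : FreeMonoid (Fin 3) →* Function.End (Option (List Bool)) :=
  FreeMonoid.lift ![act ℓ true, act ℓ false, fun _ => none]

theorem rep_comp_map_enc : (rep ℓ).comp (FreeMonoid.map enc) = FreeMonoid.lift (act ℓ) := by
  ext c
  cases c <;> rfl

theorem rep_altWord (hℓ : 0 < ℓ) :
    rep ℓ (altWord ℓ) = (fun _ => none : Function.End (Option (List Bool))) := by
  funext x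
  rw [altWord_eq, ← MonoidHom.comp_apply, rep_comp_map_enc, FreeMonoid.lift_ofList_apply,
    foldr_act (List.ne_nil_of_length_pos (by simpa [alternating] using hℓ))]
  simp [nf_alternating_append hℓ]

theorem conGen_leeRel_le_ker (hℓ : 0 < ℓ) : conGen (leeRel ℓ) ≤ Con.ker (rep ℓ) := by
  refine Con.conGen_le.2 fun u v huv => ?_
  rw [Con.ker_rel]
  rcases huv with ⟨rfl, rfl⟩ | ⟨rfl, rfl⟩ | ⟨rfl, rfl⟩ | h
  · funext x
    exact act_act true x
  · funext x
    exact act_act false x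
  · exact rep_altWord hℓ
  · rcases h with ⟨rfl, rfl⟩ | ⟨rfl, rfl⟩ | ⟨rfl, rfl⟩ | ⟨rfl, rfl⟩ | ⟨rfl, rfl⟩ <;> rfl

def toEnd (hℓ : 0 < ℓ) : Lee ℓ →* Function.End (Option (List Bool)) :=
  Con.lift _ (rep ℓ) (conGen_leeRel_le_ker hℓ)

def word (ℓ : ℕ) : FreeMonoid Bool →* Lee ℓ :=
  (conGen (leeRel ℓ)).mk'.comp (FreeMonoid.map enc)

theorem toEnd_word (hℓ : 0 < ℓ) (w : FreeMonoid Bool) :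
    toEnd hℓ (word ℓ w) = FreeMonoid.lift (act ℓ) w := by
  rw [← rep_comp_map_enc]
  rfl

theorem nf_eq_of_word_eq (hℓ : 0 < ℓ) {w w' : List Bool}
    (h : word ℓ (FreeMonoid.ofList w) = word ℓ (FreeMonoid.ofList w')) : nf ℓ w = nf ℓ w' := by
  have := congrArg (fun m => toEnd hℓ m (some [])) h
  simpa only [toEnd_word, FreeMonoid.lift_ofList_apply, foldr_act_some_nil] using this

theorem nf_flatMap_eq_of_satM (hℓ : 0 < ℓ) {u v : List ℕ} (h : SatM (Lee ℓ) u v)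
    (g : ℕ → List Bool) : nf ℓ (u.flatMap g) = nf ℓ (v.flatMap g) := by
  refine nf_eq_of_word_eq hℓ ?_
  have := h fun i => word ℓ (FreeMonoid.ofList (g i))
  simpa only [List.flatMap_def, FreeMonoid.ofList_flatten, map_list_prod, List.map_map,
    Function.comp_def] using this

theorem subset_of_satM (hℓ : 0 < ℓ) {u v : List ℕ} (h : SatM (Lee ℓ) u v) : v ⊆ u := by
  intro z hz
  by_contra hzu
  let g : ℕ → List Bool := fun z => if z ∈ u then [] else [true]
  have hv := nf_flatMap_eq_of_satM hℓ h g
  rw [List.flatMap_eq_nil_iff.2 fun z hz => if_pos hz, nf_nil] at hv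
  have hnil : v.flatMap g = [] := (List.destutter_eq_nil _).1 (destutter_eq_of_nf_eq_some hv.symm)
  simpa [g, hzu] using List.flatMap_eq_nil_iff.1 hnil z hz

end Lee

theorem stmt2_general (ℓ : ℕ) (hℓ : 2 ≤ ℓ) (x y : ℕ) (u v : List ℕ)
    (hcon : ∀ z ∈ u, z = x ∨ z = y)
    (hh : height u ≤ ℓ)
    (hsat : SatM (Lee ℓ) u v) : SameType u v := by
  have hℓ' : 0 < ℓ := by omega
  have hvcon : ∀ z ∈ v, z = x ∨ z = y := fun z hz => hcon z (Lee.subset_of_satM hℓ' hsat hz)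
  set c := u.headD x
  let e : ℕ → Bool := fun z => z ≠ c
  have he : Set.InjOn e {z | z = x ∨ z = y} := by
    have hc : c = x ∨ c = y := by cases u <;> simp [c, hcon]
    intro z₁ h₁ z₂ h₂ h
    simp only [Set.mem_ofPred_eq, e, decide_eq_decide] at h₁ h₂ h
    grind
  have hu : Lee.nf ℓ (u.map e) = some ((u.map e).destutter (· ≠ ·)) := by
    refine if_neg ?_
    rintro (hlong | ⟨-, hhead⟩)
    · rw [← List.map_destutter_ne_of_injOn he hcon, List.length_map] at hlong
      exact hh.not_gt hlong
    · rw [List.head?_destutter, List.head?_map] at hhead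
      cases u <;> simp [e, c] at hhead
  have key := Lee.nf_flatMap_eq_of_satM hℓ' hsat fun z => [e z]
  rw [← List.map_eq_flatMap, ← List.map_eq_flatMap, hu] at key
  exact SameType.of_destutter_eq
    (List.destutter_ne_eq_of_injOn he hcon hvcon (Lee.destutter_eq_of_nf_eq_some key.symm).symm)

/-- For every ℓ ≥ 2 the Lee monoid L_ℓ^1 satisfies Property (C_ℓ): if
L_ℓ^1 ⊨ u ≈ v where u is a word over the two-letter alphabet {x,y} containing both
letters and the height of u is at most ℓ, then v is of the same type as u. -/
theorem stmt2 (ℓ : ℕ) (hℓ : 2 ≤ ℓ) (x y : ℕ) (hxy : x ≠ y) (u v : List ℕ)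
    (hcon : ∀ z ∈ u, z = x ∨ z = y) (hx : x ∈ u) (hy : y ∈ u)
    (hh : height u ≤ ℓ)
    (hsat : SatM (Lee ℓ) u v) : SameType u v :=
  stmt2_general ℓ hℓ x y u v hcon hh hsat
end

section
/- If a monoid M satisfies Property (C_3), then whenever M satisfies an identity x^{m1} t_1 x^{m2} t_2 x^{m3} ≈ v (with m1,m2,m3 ≥ 1 and t_1, t_2, x distinct variables), the word v has the form x^{n1} t_1 x^{n2} t_2 x^{n3} for some positive integers n1, n2, n3. -/
/-- Property (C_ℓ): every word over a two-letter alphabet {x,y} of height at most ℓ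
can form an identity of M only with a word of the same type. -/
def PropC (M : Type*) [Monoid M] (ℓ : ℕ) : Prop :=
  ∀ x y : ℕ, x ≠ y → ∀ u v : List ℕ, u ≠ [] → (∀ z ∈ u, z = x ∨ z = y) →
    height u ≤ ℓ → SatM M u v → SameType u v


/-!
Words of the same type have the same destuttering `δ` (the sequence of their islands, whose
length is the height), so (C₃) can be tested on images of the identity under substitutions,
where `δ` of both sides is computable.

Deleting `x` turns `x^{m₁} t₁ x^{m₂} t₂ x^{m₃} ≈ v` into `t₁ t₂ ≈ v'`, and `t₁ t₂` is an
isoterm: `v' = t₁^b t₂^d` by (C₂), and substituting `t₁ ↦ t₁ t₂` (or `t₂ ↦ t₁ t₂`) would raise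
the height of the right side only, unless `b = 1` (or `d = 1`). Hence
`v = x^{n₁} t₁ x^{n₂} t₂ x^{n₃}` with `nᵢ ≥ 0`, and identifying `t₂` with `x`, `t₁` with `x`, or
`t₁` with `t₂` produces words of height at most 3 whose islands would differ from those of the
left side if `n₁`, `n₃` or `n₂` were zero.
-/

open List

namespace List

variable {α : Type*}

theorem replicate_append_cons_self (a : α) (n : ℕ) (l : List α) :
    replicate n a ++ a :: l = a :: (replicate n a ++ l) := by
  induction n with
  | zero => rfl
  | succ n ih => simp [replicate_succ, ih]

section Destutter

variable [DecidableEq α]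

@[simp]
theorem destutter'_replicate_append (a : α) (n : ℕ) (l : List α) :
    (replicate n a ++ l).destutter' (· ≠ ·) a = l.destutter' (· ≠ ·) a := by
  induction n with
  | zero => rfl
  | succ n ih => simpa [replicate_succ] using ih

@[simp]
theorem destutter'_replicate (a : α) (n : ℕ) :
    (replicate n a).destutter' (· ≠ ·) a = [a] := by
  simpa using destutter'_replicate_append a n []

theorem destutter_replicate_append {a : α} {n : ℕ} (hn : 0 < n) {l : List α}
    (hl : ∀ b ∈ l.head?, a ≠ b) :
    (replicate n a ++ l).destutter (· ≠ ·) = a :: l.destutter (· ≠ ·) := by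
  obtain ⟨n, rfl⟩ := Nat.exists_eq_add_one_of_ne_zero hn.ne'
  cases l with
  | nil => simp [replicate_succ, destutter_cons']
  | cons b l => simp [replicate_succ, destutter_cons', hl b rfl]

theorem destutter_flatMap_replicate {β : Type*} (f : β → α) (g : β → ℕ) {L : List β}
    (hpos : ∀ p ∈ L, 0 < g p) (hL : L.IsChain (fun p q => f p ≠ f q)) :
    (L.flatMap fun p => replicate (g p) (f p)).destutter (· ≠ ·) = L.map f := by
  induction L with
  | nil => rfl
  | cons p L ih =>
    rw [flatMap_cons, destutter_replicate_append (hpos p mem_cons_self),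
      ih (fun q hq => hpos q (mem_cons_of_mem p hq)) hL.tail, map_cons]
    cases L with
    | nil => simp
    | cons q L =>
      obtain ⟨k, hk⟩ := Nat.exists_eq_add_one_of_ne_zero (hpos q (by simp)).ne'
      simpa [hk, replicate_succ] using (isChain_cons_cons.mp hL).1

end Destutter

end List

def sandwich {α : Type*} (x y z : α) (a b c : ℕ) : List α :=
  replicate a x ++ y :: replicate b x ++ z :: replicate c x

section Sandwich

variable {α β : Type*} {x y z : α} {a b c : ℕ}

theorem map_sandwich (f : α → β) :
    (sandwich x y z a b c).map f = sandwich (f x) (f y) (f z) a b c := by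
  simp [sandwich]

theorem exists_eq_sandwich_of_filter_eq [DecidableEq α] {l : List α}
    (h : l.filter (· != x) = [y, z]) : ∃ a b c, l = sandwich x y z a b c := by
  have eq_replicate : ∀ l' : List α, (∀ w ∈ l', ¬(w != x) = true) → l' = replicate l'.length x :=
    fun l' hl' => eq_replicate_length.mpr fun w hw => by simpa using hl' w hw
  obtain ⟨l₁, r, rfl, h₁, -, hr⟩ := filter_eq_cons_iff.mp h
  obtain ⟨l₂, l₃, rfl, h₂, -, h₃⟩ := filter_eq_cons_iff.mp hr
  refine ⟨l₁.length, l₂.length, l₃.length, ?_⟩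
  rw [sandwich, ← eq_replicate l₁ h₁, ← eq_replicate l₂ h₂,
    ← eq_replicate l₃ (filter_eq_nil_iff.mp h₃), append_assoc, cons_append]

end Sandwich

namespace SatM

variable {M : Type*} [Monoid M] {u v : List ℕ}

theorem symm (h : SatM M u v) : SatM M v u :=
  fun θ => (h θ).symm

theorem flatMap (h : SatM M u v) (σ : ℕ → List ℕ) : SatM M (u.flatMap σ) (v.flatMap σ) := by
  intro θ
  simpa [map_flatMap, flatMap_def, prod_flatten, Function.comp_def]
    using h fun a => ((σ a).map θ).prod

theorem map (h : SatM M u v) (f : ℕ → ℕ) : SatM M (u.map f) (v.map f) := by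
  intro θ
  simpa using h (θ ∘ f)

theorem filter (h : SatM M u v) (p : ℕ → Bool) : SatM M (u.filter p) (v.filter p) := by
  simpa [← filter_flatMap] using h.flatMap fun a => [a].filter p

end SatM

namespace SameType

variable {α : Type*} [DecidableEq α] {u v : List α}

theorem destutter_eq (h : SameType u v) : u.destutter (· ≠ ·) = v.destutter (· ≠ ·) := by
  obtain ⟨L, hpos, hL, rfl, rfl⟩ := h
  rw [destutter_flatMap_replicate _ _ (fun p hp => (hpos p hp).1) hL,
    destutter_flatMap_replicate _ _ (fun p hp => (hpos p hp).2) hL]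

theorem exists_eq_replicate_append_replicate {x y : α} (hxy : x ≠ y) (h : SameType [x, y] v) :
    ∃ b d, 0 < b ∧ 0 < d ∧ v = replicate b x ++ replicate d y := by
  obtain ⟨L, hpos, hL, hu, rfl⟩ := h
  have hfst : L.map Prod.fst = [x, y] := by
    rw [← destutter_flatMap_replicate _ _ (fun p hp => (hpos p hp).1) hL, ← hu]
    simp [destutter_pair, hxy]
  rcases L with _ | ⟨p, _ | ⟨q, _ | ⟨r, L⟩⟩⟩ <;> simp at hfst
  obtain ⟨rfl, rfl⟩ := hfst
  exact ⟨p.2.2, q.2.2, (hpos p (by simp)).2, (hpos q (by simp)).2, by simp⟩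

end SameType

namespace PropC

variable {M : Type*} [Monoid M]

theorem mono {ℓ ℓ' : ℕ} (hC : PropC M ℓ) (h : ℓ' ≤ ℓ) : PropC M ℓ' :=
  fun x y hxy u v hu hxyu hh => hC x y hxy u v hu hxyu (hh.trans h)

/-- If `x` occurred twice in `w`, then substituting `x ↦ xy` would turn `[x, y]` into
`[x, y, y]`, of height 2, but `w` into a word beginning with `xyxy`; symmetrically for `y`. -/
theorem eq_pair_of_satM (hC : PropC M 2) {x y : ℕ} (hxy : x ≠ y) {w : List ℕ}
    (h : SatM M [x, y] w) : w = [x, y] := by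
  have sameType : ∀ {u v}, u ≠ [] → (∀ z ∈ u, z = x ∨ z = y) → height u ≤ 2 →
      SatM M u v → SameType u v :=
    hC x y hxy _ _
  obtain ⟨b, d, hb, hd, rfl⟩ := (sameType (by simp) (by simp) (by simp [height, hxy])
    h).exists_eq_replicate_append_replicate hxy
  obtain ⟨b, rfl⟩ := Nat.exists_eq_add_one_of_ne_zero hb.ne'
  obtain ⟨d, rfl⟩ := Nat.exists_eq_add_one_of_ne_zero hd.ne'
  obtain rfl : b = 0 := by
    by_contra hb
    obtain ⟨b, rfl⟩ := Nat.exists_eq_add_one_of_ne_zero hb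
    have := (sameType (by simp [hxy.symm]) (by simp [hxy.symm])
      (by simp [height, destutter_cons', hxy, hxy.symm])
      (h.flatMap fun w => if w = x then [x, y] else [w])).destutter_eq
    simp [destutter_cons', replicate_succ, hxy, hxy.symm] at this
  obtain rfl : d = 0 := by
    by_contra hd
    obtain ⟨d, rfl⟩ := Nat.exists_eq_add_one_of_ne_zero hd
    have := (sameType (by simp [hxy]) (by simp [hxy]) (by simp [height, destutter_cons', hxy])
      (h.flatMap fun w => if w = y then [x, y] else [w])).destutter_eq
    simp [destutter_cons', replicate_succ, hxy, hxy.symm] at this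
  rfl

section Sandwich

variable {x y z : ℕ} {m₁ m₂ m₃ n₁ n₂ n₃ : ℕ}

theorem pos_left_of_satM_sandwich (hC : PropC M 3) (hxy : x ≠ y) (hzy : z ≠ y) (hm₁ : 0 < m₁)
    (h : SatM M (sandwich x y z m₁ m₂ m₃) (sandwich x y z n₁ n₂ n₃)) : 0 < n₁ := by
  obtain ⟨m₁, rfl⟩ := Nat.exists_eq_add_one_of_ne_zero hm₁.ne'
  replace h : SatM M (sandwich x y x (m₁ + 1) m₂ m₃) (sandwich x y x n₁ n₂ n₃) := by
    simpa [map_sandwich, hxy, hzy] using h.map fun w => if w = y then y else x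
  have := (hC x y hxy _ _ (by simp [sandwich]) (fun w hw => by simp [sandwich] at hw; omega)
    (by simp [sandwich, height, destutter_cons', replicate_succ, replicate_append_cons_self,
      hxy, hxy.symm]) h).destutter_eq
  by_contra hn₁
  simp [show n₁ = 0 by omega, sandwich, destutter_cons', replicate_succ,
    replicate_append_cons_self, hxy, hxy.symm] at this

theorem pos_right_of_satM_sandwich (hC : PropC M 3) (hxz : x ≠ z) (hyz : y ≠ z) (hm₃ : 0 < m₃)
    (h : SatM M (sandwich x y z m₁ m₂ m₃) (sandwich x y z n₁ n₂ n₃)) : 0 < n₃ := by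
  obtain ⟨m₃, rfl⟩ := Nat.exists_eq_add_one_of_ne_zero hm₃.ne'
  replace h : SatM M (sandwich x x z m₁ m₂ (m₃ + 1)) (sandwich x x z n₁ n₂ n₃) := by
    simpa [map_sandwich, hxz, hyz] using h.map fun w => if w = z then z else x
  have := (hC x z hxz _ _ (by simp [sandwich]) (fun w hw => by simp [sandwich] at hw; omega)
    (by simp [sandwich, height, destutter_cons', replicate_succ, replicate_append_cons_self,
      hxz, hxz.symm]) h).destutter_eq
  by_contra hn₃
  simp [show n₃ = 0 by omega, sandwich, destutter_cons', replicate_succ,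
    replicate_append_cons_self, hxz, hxz.symm] at this

theorem pos_middle_of_satM_sandwich (hC : PropC M 3) (hxy : x ≠ y) (hxz : x ≠ z) (hm₂ : 0 < m₂)
    (hn₁ : 0 < n₁) (hn₃ : 0 < n₃)
    (h : SatM M (sandwich x y z m₁ m₂ m₃) (sandwich x y z n₁ n₂ n₃)) : 0 < n₂ := by
  obtain ⟨m₂, rfl⟩ := Nat.exists_eq_add_one_of_ne_zero hm₂.ne'
  obtain ⟨n₁, rfl⟩ := Nat.exists_eq_add_one_of_ne_zero hn₁.ne'
  obtain ⟨n₃, rfl⟩ := Nat.exists_eq_add_one_of_ne_zero hn₃.ne'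
  replace h : SatM M (sandwich x y y (n₁ + 1) n₂ (n₃ + 1)) (sandwich x y y m₁ (m₂ + 1) m₃) := by
    simpa [map_sandwich, hxy.symm, hxz.symm] using (h.map fun w => if w = x then x else y).symm
  by_contra hn₂
  obtain rfl : n₂ = 0 := by omega
  have := (hC x y hxy _ _ (by simp [sandwich]) (fun w hw => by simp [sandwich] at hw; omega)
    (by simp [sandwich, height, destutter_cons', replicate_succ, hxy, hxy.symm]) h).destutter_eq
  cases m₁ <;> cases m₃ <;>
    simp [sandwich, destutter_cons', replicate_succ, hxy, hxy.symm] at this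

end Sandwich

end PropC

/-- If a monoid M satisfies Property (C_3), then (with x = 0, t₁ = 1, t₂ = 2) any
identity x^{m₁} t₁ x^{m₂} t₂ x^{m₃} ≈ v of M (m₁,m₂,m₃ ≥ 1) forces
v = x^{n₁} t₁ x^{n₂} t₂ x^{n₃} for some positive n₁, n₂, n₃. -/
theorem stmt8 (M : Type*) [Monoid M] (hC : PropC M 3)
    (m₁ m₂ m₃ : ℕ) (h₁ : 1 ≤ m₁) (h₂ : 1 ≤ m₂) (h₃ : 1 ≤ m₃) (v : List ℕ)
    (hsat : SatM M
      (List.replicate m₁ 0 ++ 1 :: List.replicate m₂ 0 ++ 2 :: List.replicate m₃ 0) v) :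
    ∃ n₁ n₂ n₃, 1 ≤ n₁ ∧ 1 ≤ n₂ ∧ 1 ≤ n₃ ∧
      v = List.replicate n₁ 0 ++ 1 :: List.replicate n₂ 0 ++ 2 :: List.replicate n₃ 0 := by
  have hletters : v.filter (· != 0) = [1, 2] :=
    (hC.mono (by norm_num)).eq_pair_of_satM (by norm_num) (by simpa using hsat.filter (· != 0))
  obtain ⟨n₁, n₂, n₃, rfl⟩ := exists_eq_sandwich_of_filter_eq hletters
  replace hsat : SatM M (sandwich 0 1 2 m₁ m₂ m₃) (sandwich 0 1 2 n₁ n₂ n₃) := hsat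
  have hn₁ := hC.pos_left_of_satM_sandwich (by norm_num) (by norm_num) h₁ hsat
  have hn₃ := hC.pos_right_of_satM_sandwich (by norm_num) (by norm_num) h₃ hsat
  have hn₂ := hC.pos_middle_of_satM_sandwich (by norm_num) (by norm_num) h₂ hn₁ hn₃ hsat
  exact ⟨n₁, n₂, n₃, hn₁, hn₂, hn₃, rfl⟩
end

section
/- Let M be a monoid satisfying Property (C_3). If M satisfies an identity u ≈ v, then: (i) u and v have the same set of linear variables, the same set of non-linear variables, and the linear variables occur in the same order in u and v; (ii) writing u = a_0 t_1 a_1 t_2 ··· t_m a_m where t_1,...,t_m are the linear variables of u and the a_q are the blocks (possibly empty words in the non-linear variables), then v = b_0 t_1 b_1 t_2 ··· t_m b_m with con(a_q) = con(b_q) for each 0 ≤ q ≤ m. -/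
/-- `assemble [a₀,a₁,…,a_m] [t₁,…,t_m] = a₀ t₁ a₁ t₂ ⋯ t_m a_m`:  the word with
blocks a_q separated by the linear letters t_q. -/
def assemble : List (List ℕ) → List ℕ → List ℕ
  | [], _ => []
  | a :: _, [] => a
  | a :: A, t :: T => a ++ t :: assemble A T

/-- u(x,y): the word obtained from u by deleting all occurrences of variables other
than x and y. -/
def proj (u : List ℕ) (x y : ℕ) : List ℕ := u.filter (fun z => z == x || z == y)

open List

section Words

variable {α β : Type*}

theorem sublist_map_of_sublist_flatMap_replicate (f : β → α) (n : β → ℕ) {p : List α}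
    (hp : p.IsChain (· ≠ ·)) :
    ∀ {L : List β}, p <+ L.flatMap (fun b => replicate (n b) (f b)) → p <+ L.map f
  | [], h => by simpa using h
  | b :: L, h => by
    rw [flatMap_cons] at h
    obtain ⟨p₁, p₂, rfl, h₁, h₂⟩ := sublist_append_iff.mp h
    obtain ⟨k, -, rfl⟩ := sublist_replicate_iff.mp h₁
    have ih := sublist_map_of_sublist_flatMap_replicate f n hp.right_of_append h₂
    match k, hp with
    | 0, _ => simpa using ih.cons (f b)
    | 1, _ => simpa using ih.cons_cons (f b)
    | k + 2, hp => simp [replicate_succ] at hp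

theorem map_sublist_flatMap_replicate (f : β → α) (n : β → ℕ) :
    ∀ {L : List β}, (∀ b ∈ L, 0 < n b) →
      L.map f <+ L.flatMap (fun b => replicate (n b) (f b))
  | [], _ => by simp
  | b :: L, hn => by
    have hb : [f b] <+ replicate (n b) (f b) :=
      singleton_sublist.mpr (mem_replicate.mpr ⟨(hn b mem_cons_self).ne', rfl⟩)
    exact hb.append (map_sublist_flatMap_replicate f n fun c hc => hn c (mem_cons_of_mem _ hc))

theorem SameType.sublist_iff {u v : List α} (h : SameType u v) {p : List α}
    (hp : p.IsChain (· ≠ ·)) : p <+ u ↔ p <+ v := by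
  obtain ⟨L, hpos, -, rfl, rfl⟩ := h
  exact ⟨fun hu => (sublist_map_of_sublist_flatMap_replicate _ _ hp hu).trans
      (map_sublist_flatMap_replicate _ _ fun b hb => (hpos b hb).2),
    fun hv => (sublist_map_of_sublist_flatMap_replicate _ _ hp hv).trans
      (map_sublist_flatMap_replicate _ _ fun b hb => (hpos b hb).1)⟩

theorem not_sublist_replicate_append_cons_cons {x s : α} (h : x ≠ s) (p r : ℕ) :
    ¬ [s, x, s] <+ replicate p x ++ s :: s :: replicate r x := by
  intro hsub
  obtain ⟨l₁, l₂, hl, h₁, h₂⟩ := sublist_append_iff.mp hsub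
  obtain ⟨k, -, rfl⟩ := sublist_replicate_iff.mp h₁
  rcases k with _ | k
  · simp only [replicate_zero, nil_append] at hl
    subst hl
    have hs : s ∈ replicate r x := by
      have h₃ : [s, x, s] <+ replicate r x ∨ [x, s] <+ replicate r x := by
        simpa [sublist_cons_iff, h] using h₂
      rcases h₃ with h₃ | h₃ <;> exact h₃.subset (by simp)
    exact h (eq_of_mem_replicate hs).symm
  · simp [replicate_succ] at hl
    exact h hl.1.symm

variable [DecidableEq α]

theorem length_destutter'_append_le (l₁ l₂ : List α) (a : α) :
    ((l₁ ++ l₂).destutter' (· ≠ ·) a).length ≤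
      (l₁.destutter' (· ≠ ·) a).length + (l₂.destutter (· ≠ ·)).length := by
  induction l₁ generalizing a with
  | nil =>
    cases l₂ with
    | nil => simp
    | cons b l₂ =>
      by_cases hab : a = b
      · subst hab
        simp [destutter'_cons_neg, destutter_cons']
      · simp [hab, destutter_cons']
  | cons b l₁ ih =>
    by_cases hab : a = b
    · subst hab
      simpa [destutter'_cons_neg] using ih a
    · simp only [cons_append, destutter'_cons, if_pos hab, length_cons]
      linarith [ih b]

theorem height_append_le (l₁ l₂ : List α) :
    height (l₁ ++ l₂) ≤ height l₁ + height l₂ := by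
  cases l₁ with
  | nil => simp [height]
  | cons a l₁ => simpa [height, destutter_cons'] using length_destutter'_append_le l₁ l₂ a

theorem height_replicate_le_one (n : ℕ) (a : α) : height (replicate n a) ≤ 1 := by
  have h : ∀ n, (replicate n a).destutter' (· ≠ ·) a = [a] := by
    intro n
    induction n with
    | zero => rfl
    | succ n ih => rw [replicate_succ, destutter'_cons_neg _ (by simp), ih]
  cases n <;> simp [height, replicate_succ, destutter_cons', h]

theorem height_le_length (l : List α) : height l ≤ l.length :=
  (destutter_sublist _ l).length_le

theorem height_replicate_append_cons_cons_le (x s : α) (p r : ℕ) :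
    height (replicate p x ++ s :: s :: replicate r x) ≤ 3 :=
  calc height (replicate p x ++ (replicate 2 s ++ replicate r x))
      _ ≤ height (replicate p x) + (height (replicate 2 s) + height (replicate r x)) :=
        (height_append_le _ _).trans (Nat.add_le_add_left (height_append_le _ _) _)
      _ ≤ 1 + (1 + 1) := by gcongr <;> exact height_replicate_le_one _ _

theorem flatMap_eq_replicate_count {σ : α → List α} {x : α} (hx : σ x = [x]) :
    ∀ {w : List α}, (∀ z ∈ w, z ≠ x → σ z = []) →
      w.flatMap σ = replicate (w.count x) x
  | [], _ => rfl
  | z :: w, hw => by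
    rw [flatMap_cons, flatMap_eq_replicate_count hx fun c hc => hw c (mem_cons_of_mem _ hc)]
    by_cases hz : z = x
    · simp [hz, hx, replicate_succ]
    · simp [hw z mem_cons_self hz, hz]

end Words

theorem length_proj {x y : ℕ} (hxy : x ≠ y) (u : List ℕ) :
    (proj u x y).length = u.count x + u.count y := by
  induction u with
  | nil => rfl
  | cons z u ih =>
    simp only [proj] at ih ⊢
    by_cases hx : z = x
    · subst hx
      simp [hxy, ih]
      omega
    · by_cases hy : z = y
      · subst hy
        simp [hx, ih]
        omega
      · simp [hx, hy, ih]

theorem sublist_proj_of_sublist {p u : List ℕ} {x y : ℕ} (h : p <+ u)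
    (hp : ∀ z ∈ p, z = x ∨ z = y) : p <+ proj u x y := by
  have hfix : p.filter (fun z => z == x || z == y) = p :=
    filter_eq_self.mpr fun z hz => by simpa using hp z hz
  rw [← hfix]
  exact h.filter _

theorem eq_of_pair_sublist_of_pair_sublist {u : List ℕ} {x y : ℕ} (hx : u.count x = 1)
    (hy : u.count y = 1) (hxy : [x, y] <+ u) (hyx : [y, x] <+ u) : x = y := by
  by_contra hne
  have hlen : (proj u x y).length = 2 := by rw [length_proj hne, hx, hy]
  have h₁ := (sublist_proj_of_sublist (x := x) (y := y) hxy (by simp)).eq_of_length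
    (by rw [hlen]; rfl)
  have h₂ := (sublist_proj_of_sublist (x := x) (y := y) hyx (by simp)).eq_of_length
    (by rw [hlen]; rfl)
  exact hne (cons_eq_cons.mp (h₁.trans h₂.symm)).1

theorem mem_filter_count_eq_one {u : List ℕ} {a : ℕ} :
    a ∈ u.filter (fun x => u.count x == 1) ↔ u.count a = 1 := by
  simp only [mem_filter, beq_iff_eq, and_iff_right_iff_imp]
  exact fun h => count_pos_iff.mp (by omega)

theorem nodup_filter_count_eq_one (u : List ℕ) : (u.filter fun x => u.count x == 1).Nodup := by
  refine nodup_iff_count_le_one.mpr fun a => ?_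
  by_cases ha : u.count a = 1
  · rw [count_filter (by simpa using ha), ha]
  · rw [count_eq_zero.mpr (mt mem_filter_count_eq_one.mp ha)]
    omega

def collapse (x s t z : ℕ) : List ℕ :=
  if z = s ∨ z = t then [s] else if z = x then [x] else []

theorem flatMap_collapse {P a R : List ℕ} {s t x : ℕ} (hs : (P ++ s :: a ++ t :: R).count s = 1)
    (ht : (P ++ s :: a ++ t :: R).count t = 1) (hxs : x ≠ s) (hxt : x ≠ t) :
    (P ++ s :: a ++ t :: R).flatMap (collapse x s t) =
      replicate (P.count x) x ++ s :: replicate (a.count x) x ++ s :: replicate (R.count x) x := by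
  have hst : s ≠ t := by
    rintro rfl
    simp [count_append] at hs
    omega
  simp [count_append, hst, Ne.symm hst] at hs ht
  have key : ∀ w : List ℕ, w.count s = 0 → w.count t = 0 →
      w.flatMap (collapse x s t) = replicate (w.count x) x := by
    intro w hsw htw
    refine flatMap_eq_replicate_count (by simp [collapse, hxs, hxt]) fun z hz hzx => ?_
    have : z ≠ s := by rintro rfl; simp_all [count_eq_zero]
    have : z ≠ t := by rintro rfl; simp_all [count_eq_zero]
    simp [collapse, *]
  simp [collapse, key P (by omega) (by omega), key a (by omega) (by omega),
    key R (by omega) (by omega)]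

theorem assemble_cons_cons (z : ℕ) (a : List ℕ) (A : List (List ℕ)) (T : List ℕ) :
    assemble ((z :: a) :: A) T = z :: assemble (a :: A) T := by
  cases A <;> cases T <;> rfl

theorem filter_assemble {p : ℕ → Bool} {A : List (List ℕ)} {T : List ℕ}
    (hl : A.length = T.length + 1) (hA : ∀ a ∈ A, ∀ z ∈ a, p z = false)
    (hT : ∀ t ∈ T, p t = true) : (assemble A T).filter p = T := by
  induction T generalizing A with
  | nil =>
    obtain ⟨a, rfl⟩ := length_eq_one_iff.mp hl
    exact filter_eq_nil_iff.mpr fun z hz => by simp [hA a mem_cons_self z hz]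
  | cons t T ih =>
    obtain ⟨a, A, rfl⟩ := exists_cons_of_length_eq_add_one hl
    have ha : a.filter p = [] :=
      filter_eq_nil_iff.mpr fun z hz => by simp [hA a mem_cons_self z hz]
    simp only [assemble, filter_append, ha, filter_cons, hT t mem_cons_self, if_true, nil_append]
    rw [ih (by simpa using hl) (fun b hb => hA b (mem_cons_of_mem _ hb))
      (fun s hs => hT s (mem_cons_of_mem _ hs))]

theorem exists_eq_assemble_filter (p : ℕ → Bool) :
    ∀ v : List ℕ, ∃ B, B.length = (v.filter p).length + 1 ∧ v = assemble B (v.filter p)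
  | [] => ⟨[[]], rfl, rfl⟩
  | z :: v => by
    obtain ⟨B, hB, hv⟩ := exists_eq_assemble_filter p v
    by_cases hz : p z
    · refine ⟨[] :: B, by simp [hz, hB], ?_⟩
      simp only [filter_cons, hz, if_true, assemble, nil_append]
      rw [← hv]
    · obtain ⟨b, B, rfl⟩ := exists_cons_of_length_eq_add_one hB
      refine ⟨(z :: b) :: B, by simpa [hz] using hB, ?_⟩
      rw [filter_cons_of_neg hz, assemble_cons_cons, ← hv]

theorem assemble_append_singleton (a : List ℕ) (e : ℕ) {A : List (List ℕ)} {T : List ℕ}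
    (hl : A.length = T.length + 1) : assemble (A ++ [a]) (T ++ [e]) = assemble A T ++ e :: a := by
  induction T generalizing A with
  | nil =>
    obtain ⟨a₀, rfl⟩ := length_eq_one_iff.mp hl
    rfl
  | cons t T ih =>
    obtain ⟨a₀, A, rfl⟩ := exists_cons_of_length_eq_add_one hl
    simp [assemble, ih (by simpa using hl)]

theorem exists_assemble_eq_append (i : ℕ) :
    ∀ {A : List (List ℕ)} {T : List ℕ} (hl : A.length = T.length + 1) (hi : i + 1 < T.length),
      ∃ P R, assemble A T = P ++ T[i] :: A[i + 1]'(by omega) ++ T[i + 1] :: R := by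
  induction i with
  | zero =>
    rintro (_ | ⟨a₀, _ | ⟨a₁, A⟩⟩) (_ | ⟨t₀, _ | ⟨t₁, T⟩⟩) hl hi <;>
      simp at hl hi
    exact ⟨a₀, assemble A T, by simp [assemble]⟩
  | succ i ih =>
    rintro (_ | ⟨a₀, A⟩) (_ | ⟨t₀, T⟩) hl hi <;> simp at hl hi
    obtain ⟨P, R, h⟩ := ih (A := A) (T := T) (by omega) (by omega)
    exact ⟨a₀ ++ t₀ :: P, R, by simp [assemble, h]⟩

theorem exists_cons_assemble_append_eq {C : List (List ℕ)} {T : List ℕ} (s e : ℕ)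
    (hl : C.length = T.length + 1) {i : ℕ} (hi : i < C.length) :
    ∃ P R, s :: assemble C T ++ [e] = P ++ (s :: (T ++ [e]))[i]'(by simp; omega) :: C[i] ++
      (s :: (T ++ [e]))[i + 1]'(by simp; omega) :: R := by
  have := exists_assemble_eq_append i (A := [] :: (C ++ [[]])) (T := s :: (T ++ [e]))
    (by simp [hl]) (by simp; omega)
  simpa [assemble, assemble_append_singleton [] e hl, getElem_append_left hi] using this

theorem count_cons_append_singleton_eq_one {w T : List ℕ} {s e : ℕ}
    (hT : ∀ t ∈ T, w.count t = 1) (hs : s ∉ w) (he : e ∉ w) (hse : s ≠ e) :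
    ∀ t ∈ s :: (T ++ [e]), (s :: w ++ [e]).count t = 1 := by
  intro t ht
  rw [mem_cons, mem_append, mem_singleton] at ht
  rcases ht with rfl | ht | rfl
  · simp [count_append, count_eq_zero.mpr hs, Ne.symm hse]
  · have htw : t ∈ w := count_pos_iff.mp (by rw [hT t ht]; omega)
    simp [count_append, hT t ht, (ne_of_mem_of_not_mem htw hs).symm,
      (ne_of_mem_of_not_mem htw he).symm]
  · simp [count_append, count_eq_zero.mpr he, hse]

namespace SatM

variable {M : Type*} [Monoid M] {u v : List ℕ}

theorem cons_append_singleton (h : SatM M u v) (s e : ℕ) :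
    SatM M (s :: u ++ [e]) (s :: v ++ [e]) :=
  fun θ => by simp [h θ]

theorem mem_of_mem (hC : PropC M 3) (h : SatM M u v) {x : ℕ} (hx : x ∈ u) : x ∈ v := by
  have hST : SameType (u.filter (· == x)) (v.filter (· == x)) := by
    refine hC x (x + 1) (by omega) _ _ ?_ (by simp +contextual) ?_ (h.filter _)
    · simpa [filter_eq_nil_iff] using hx
    · rw [filter_beq]
      exact (height_replicate_le_one _ _).trans (by norm_num)
  simpa using (hST.sublist_iff (p := [x]) (by simp)).mp (by simpa using hx)

theorem count_eq_one (hC : PropC M 3) (h : SatM M u v) {x : ℕ} (hx : u.count x = 1) :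
    v.count x = 1 := by
  obtain ⟨k, hk⟩ : ∃ k, v.count x = k + 1 :=
    Nat.exists_eq_add_one.mpr (count_pos_iff.mpr (h.mem_of_mem hC (count_pos_iff.mp (by omega))))
  by_contra hne
  obtain ⟨k, rfl⟩ : ∃ j, k = j + 1 := Nat.exists_eq_add_one.mpr (by omega)
  have h' := (h.filter (· == x)).flatMap fun _ => [x, x + 1]
  rw [filter_beq, filter_beq, flatMap_replicate, flatMap_replicate, hx, hk] at h'
  have hST := hC x (x + 1) (by omega) _ _ (by simp) (by simp) (by simp [height]) h'
  have hyx : [x + 1, x] <+ (replicate (k + 1 + 1) [x, x + 1]).flatten := by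
    simp [replicate_succ]
  exact absurd (((hST.sublist_iff (by simp)).mpr hyx).eq_of_length rfl) (by simp)

theorem sublist_pair (hC : PropC M 3) (h : SatM M u v) {x y : ℕ} (hx : u.count x = 1)
    (hy : u.count y = 1) (hxy : [x, y] <+ u) : [x, y] <+ v := by
  have hne : x ≠ y := by
    rintro rfl
    have := hxy.count_le x
    simp at this
    omega
  have hproj : [x, y] <+ proj u x y := sublist_proj_of_sublist hxy (by simp)
  have hST := hC x y hne (proj u x y) (proj v x y) (ne_nil_of_mem (hproj.subset mem_cons_self))
    (by simp [proj]) ((height_le_length _).trans (by rw [length_proj hne, hx, hy]; norm_num))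
    (h.filter _)
  exact ((hST.sublist_iff (by simpa using hne)).mp hproj).trans filter_sublist

theorem filter_count_eq_one_eq (hC : PropC M 3) (h : SatM M u v) :
    u.filter (fun x => u.count x == 1) = v.filter (fun x => v.count x == 1) := by
  have hlin : ∀ x, u.count x = 1 ↔ v.count x = 1 :=
    fun x => ⟨h.count_eq_one hC, h.symm.count_eq_one hC⟩
  refine Perm.eq_of_pairwise (le := fun x y => [x, y] <+ u) ?_ ?_ ?_ ?_
  · intro a b ha hb hab hba
    exact eq_of_pair_sublist_of_pair_sublist (mem_filter_count_eq_one.mp ha)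
      ((hlin b).mpr (mem_filter_count_eq_one.mp hb)) hab hba
  · exact pairwise_iff_forall_sublist.mpr fun hab => hab.trans filter_sublist
  · refine pairwise_iff_forall_sublist.mpr fun {a b} hab => ?_
    exact h.symm.sublist_pair hC (mem_filter_count_eq_one.mp (hab.subset (by simp)))
      (mem_filter_count_eq_one.mp (hab.subset (by simp))) (hab.trans filter_sublist)
  · refine (perm_ext_iff_of_nodup (nodup_filter_count_eq_one u)
      (nodup_filter_count_eq_one v)).mpr fun a => ?_
    rw [mem_filter_count_eq_one, mem_filter_count_eq_one, hlin]

theorem mem_of_mem_between (hC : PropC M 3) {P a R Q b S : List ℕ} {s t x : ℕ}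
    (h : SatM M (P ++ s :: a ++ t :: R) (Q ++ s :: b ++ t :: S))
    (hsu : (P ++ s :: a ++ t :: R).count s = 1) (htu : (P ++ s :: a ++ t :: R).count t = 1)
    (hsv : (Q ++ s :: b ++ t :: S).count s = 1) (htv : (Q ++ s :: b ++ t :: S).count t = 1)
    (hx : x ∈ a) : x ∈ b := by
  have hxa : 0 < a.count x := count_pos_iff.mpr hx
  have hxs : x ≠ s := by rintro rfl; simp [count_append] at hsu; omega
  have hxt : x ≠ t := by rintro rfl; simp [count_append, count_cons] at htu; omega
  by_contra hxb
  have h' := h.symm.flatMap (collapse x s t)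
  rw [flatMap_collapse hsu htu hxs hxt, flatMap_collapse hsv htv hxs hxt,
    count_eq_zero.mpr hxb] at h'
  simp only [replicate_zero, append_assoc, cons_append, nil_append] at h'
  have hST := hC x s hxs _ _ (by simp) (fun z hz => by simp at hz; omega)
    (height_replicate_append_cons_cons_le _ _ _ _) h'
  have hsxs : [s, x, s] <+ replicate (P.count x) x ++
      s :: (replicate (a.count x) x ++ s :: replicate (R.count x) x) := by
    have hxs' : [x, s] <+ replicate (a.count x) x ++ s :: replicate (R.count x) x :=
      (singleton_sublist.mpr (mem_replicate.mpr ⟨hxa.ne', rfl⟩)).append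
        ((nil_sublist _).cons_cons s)
    exact sublist_append_of_sublist_right (hxs'.cons_cons s)
  exact not_sublist_replicate_append_cons_cons hxs _ _
    ((hST.sublist_iff (by simp [hxs, Ne.symm hxs])).mpr hsxs)

theorem mem_getElem_of_mem (hC : PropC M 3) {A B : List (List ℕ)} {T : List ℕ}
    (h : SatM M (assemble A T) (assemble B T)) (hA : A.length = T.length + 1)
    (hB : B.length = T.length + 1) (hTA : ∀ t ∈ T, (assemble A T).count t = 1)
    (hTB : ∀ t ∈ T, (assemble B T).count t = 1) {i : ℕ} (hiA : i < A.length)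
    (hiB : i < B.length) {x : ℕ} (hx : x ∈ A[i]) : x ∈ B[i] := by
  obtain ⟨s, hs⟩ := (assemble A T ++ assemble B T).toFinset.exists_notMem
  obtain ⟨e, he⟩ := (s :: (assemble A T ++ assemble B T)).toFinset.exists_notMem
  simp only [mem_toFinset, mem_append, mem_cons, not_or] at hs he
  have hcA := count_cons_append_singleton_eq_one hTA hs.1 he.2.1 (Ne.symm he.1)
  have hcB := count_cons_append_singleton_eq_one hTB hs.2 he.2.2 (Ne.symm he.1)
  obtain ⟨P, R, hP⟩ := exists_cons_assemble_append_eq s e hA hiA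
  obtain ⟨Q, S, hQ⟩ := exists_cons_assemble_append_eq s e hB hiB
  have h' := h.cons_append_singleton s e
  rw [hP, hQ] at h'
  rw [hP] at hcA
  rw [hQ] at hcB
  exact h'.mem_of_mem_between hC (hcA _ (getElem_mem _)) (hcA _ (getElem_mem _))
    (hcB _ (getElem_mem _)) (hcB _ (getElem_mem _)) hx

end SatM

theorem stmt9_general (M : Type*) [Monoid M] (hC : PropC M 3)
    (u v : List ℕ) (hsat : SatM M u v)
    (A : List (List ℕ)) (T : List ℕ)
    (hlen : A.length = T.length + 1)
    (hu : u = assemble A T)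
    (hTlin : ∀ t ∈ T, u.count t = 1)
    (hAnon : ∀ a ∈ A, ∀ x ∈ a, 2 ≤ u.count x) :
    (∀ x, u.count x = 1 ↔ v.count x = 1) ∧
    (∀ x, 2 ≤ u.count x ↔ 2 ≤ v.count x) ∧
    (u.filter (fun x => u.count x == 1) = v.filter (fun x => v.count x == 1)) ∧
    ∃ B : List (List ℕ), v = assemble B T ∧
      List.Forall₂ (fun a b => a.toFinset = b.toFinset) A B := by
  have hlin : ∀ x, u.count x = 1 ↔ v.count x = 1 :=
    fun x => ⟨hsat.count_eq_one hC, hsat.symm.count_eq_one hC⟩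
  have hmem : ∀ x, 0 < u.count x ↔ 0 < v.count x := fun x => by
    simp only [count_pos_iff]
    exact ⟨hsat.mem_of_mem hC, hsat.symm.mem_of_mem hC⟩
  have horder := hsat.filter_count_eq_one_eq hC
  have hT : u.filter (fun x => u.count x == 1) = T := by
    rw [hu] at hTlin hAnon ⊢
    exact filter_assemble hlen (fun a ha x hx => by have := hAnon a ha x hx; simp; omega)
      (fun t ht => by simpa using hTlin t ht)
  obtain ⟨B, hB, hv⟩ := exists_eq_assemble_filter (fun x => v.count x == 1) v
  rw [← horder, hT] at hB hv
  refine ⟨hlin, fun x => by have := hlin x; have := hmem x; omega, horder, B, hv,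
    forall₂_iff_get.mpr ⟨by omega, fun i hiA hiB => ?_⟩⟩
  have hTv : ∀ t ∈ T, v.count t = 1 := fun t ht => (hlin t).mp (hTlin t ht)
  subst hu
  rw [hv] at hsat hTv
  ext x
  simp only [get_eq_getElem, mem_toFinset]
  exact ⟨hsat.mem_getElem_of_mem hC hlen hB hTlin hTv hiA hiB,
    hsat.symm.mem_getElem_of_mem hC hB hlen hTv hTlin hiB hiA⟩

/-- Structure lemma: if M satisfies (C_3) and M ⊨ u ≈ v, where
u = a₀t₁a₁t₂⋯t_m a_m with t₁,…,t_m exactly the linear variables of u and the a_q the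
blocks, then u and v have the same linear and non-linear variables, the linear
variables occur in the same order, and v = b₀t₁b₁t₂⋯t_m b_m with
con(a_q) = con(b_q) for all q. -/
theorem stmt9 (M : Type*) [Monoid M] (hC : PropC M 3)
    (u v : List ℕ) (hsat : SatM M u v)
    (A : List (List ℕ)) (T : List ℕ)
    (hlen : A.length = T.length + 1)
    (hu : u = assemble A T)
    (hTlin : ∀ t ∈ T, u.count t = 1)
    (hTall : ∀ x, u.count x = 1 → x ∈ T)
    (hAnon : ∀ a ∈ A, ∀ x ∈ a, 2 ≤ u.count x) :
    (∀ x, u.count x = 1 ↔ v.count x = 1) ∧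
    (∀ x, 2 ≤ u.count x ↔ 2 ≤ v.count x) ∧
    (u.filter (fun x => u.count x == 1) = v.filter (fun x => v.count x == 1)) ∧
    ∃ B : List (List ℕ), v = assemble B T ∧
      List.Forall₂ (fun a b => a.toFinset = b.toFinset) A B :=
  stmt9_general M hC u v hsat A T hlen hu hTlin hAnon
end

section
/- Let u and v be words of the same type with the same sets of linear and non-linear variables. Let Θ be a substitution from variables to nonempty words such that whenever Θ(x) contains more than one distinct variable, x is linear in u. Then Θ(u) and Θ(v) are of the same type. -/
namespace SameType

variable {α : Type*}

theorem replicate {m n : ℕ} (hm : 0 < m) (hn : 0 < n) (d : α) :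
    SameType (List.replicate m d) (List.replicate n d) :=
  ⟨[(d, m, n)], by simp [hm, hn], List.isChain_singleton _, by simp, by simp⟩

theorem replicate_append_s13 {u v : List α} (h : SameType u v) (c : α) {a b : ℕ}
    (ha : 0 < a) (hb : 0 < b) :
    SameType (List.replicate a c ++ u) (List.replicate b c ++ v) := by
  obtain ⟨L, hpos, hchain, rfl, rfl⟩ := h
  rcases L with _ | ⟨⟨d, p, q⟩, L⟩
  · simpa using replicate ha hb c
  by_cases hcd : c = d
  · subst hcd
    refine ⟨(c, a + p, b + q) :: L, ?_, List.isChain_cons.mpr (List.isChain_cons.mp hchain),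
      ?_, ?_⟩
    · rintro r (_ | ⟨_, hr⟩)
      · exact ⟨Nat.add_pos_left ha p, Nat.add_pos_left hb q⟩
      · exact hpos r (List.mem_cons_of_mem _ hr)
    all_goals simp only [List.flatMap_cons, List.replicate_add, List.append_assoc]
  · refine ⟨(c, a, b) :: (d, p, q) :: L, ?_, List.isChain_cons_cons.mpr ⟨hcd, hchain⟩,
      by simp, by simp⟩
    rintro r (_ | ⟨_, hr⟩)
    · exact ⟨ha, hb⟩
    · exact hpos r hr

theorem refl (w : List α) : SameType w w := by
  induction w with
  | nil => exact ⟨[], by simp, List.isChain_nil, rfl, rfl⟩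
  | cons c w ih => simpa using ih.replicate_append_s13 c one_pos one_pos

theorem append {u v u' v' : List α} (h : SameType u v) (h' : SameType u' v') :
    SameType (u ++ u') (v ++ v') := by
  obtain ⟨L, hpos, hchain, rfl, rfl⟩ := h
  induction L with
  | nil => simpa using h'
  | cons p L ih =>
    obtain ⟨hp₁, hp₂⟩ := hpos p List.mem_cons_self
    have := (ih (fun r hr => hpos r (List.mem_cons_of_mem _ hr)) hchain.tail).replicate_append_s13
      p.1 hp₁ hp₂
    simpa [List.flatMap_cons, List.append_assoc] using this

theorem flatMap {ι : Type*} (l : List ι) {f g : ι → List α}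
    (h : ∀ i ∈ l, SameType (f i) (g i)) : SameType (l.flatMap f) (l.flatMap g) := by
  induction l with
  | nil => exact refl []
  | cons i l ih =>
    simpa using (h i List.mem_cons_self).append (ih fun j hj => h j (List.mem_cons_of_mem _ hj))

end SameType

theorem List.count_le_count_flatMap {ι α : Type*} [BEq α] {l : List ι} {f : ι → List α}
    {i : ι} (hi : i ∈ l) (x : α) : (f i).count x ≤ (l.flatMap f).count x := by
  rw [List.count_flatMap]
  exact List.le_sum_of_mem (List.mem_map_of_mem hi)

theorem sameType_flatMap_replicate_of_card_le_one {α β : Type*} [DecidableEq β]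
    (Θ : α → List β) {c : α} (hne : Θ c ≠ []) (hcard : (Θ c).toFinset.card ≤ 1)
    {a b : ℕ} (ha : 0 < a) (hb : 0 < b) :
    SameType ((List.replicate a c).flatMap Θ) ((List.replicate b c).flatMap Θ) := by
  obtain ⟨d, hd⟩ := List.exists_mem_of_ne_nil _ hne
  have hΘc : Θ c = List.replicate (Θ c).length d := List.eq_replicate_of_mem fun e he =>
    Finset.card_le_one.mp hcard e (List.mem_toFinset.mpr he) d (List.mem_toFinset.mpr hd)
  have hk : 0 < (Θ c).length := List.length_pos_iff.mpr hne
  rw [List.flatMap_replicate, List.flatMap_replicate, hΘc, List.flatten_replicate_replicate,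
    List.flatten_replicate_replicate]
  exact SameType.replicate (by positivity) (by positivity) d

theorem stmt13_general (u v : List ℕ) (hst : SameType u v)
    (hlin : ∀ x, u.count x = 1 ↔ v.count x = 1)
    (Θ : ℕ → List ℕ) (hne : ∀ x, Θ x ≠ [])
    (hstar : ∀ x ∈ u, 2 ≤ (Θ x).toFinset.card → u.count x = 1) :
    SameType (u.flatMap Θ) (v.flatMap Θ) := by
  obtain ⟨L, hpos, -, rfl, rfl⟩ := hst
  rw [List.flatMap_assoc, List.flatMap_assoc]
  refine SameType.flatMap L fun ⟨c, a, b⟩ hp => ?_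
  obtain ⟨ha, hb⟩ : 0 < a ∧ 0 < b := hpos _ hp
  have hau := List.count_le_count_flatMap (f := fun p => List.replicate p.2.1 p.1) hp c
  have hbv := List.count_le_count_flatMap (f := fun p => List.replicate p.2.2 p.1) hp c
  simp only [List.count_replicate_self] at hau hbv
  by_cases hcard : 2 ≤ (Θ c).toFinset.card
  · have hu₁ := hstar c (List.count_pos_iff.mp (by omega)) hcard
    have hv₁ := (hlin c).mp hu₁
    obtain rfl : a = 1 := by omega
    obtain rfl : b = 1 := by omega
    exact SameType.refl _
  · exact sameType_flatMap_replicate_of_card_le_one Θ (hne c) (by omega) ha hb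

/-- Let u and v be words of the same type with the same linear and non-linear
variables, and Θ a substitution into nonempty words such that any variable of u
whose image contains more than one distinct variable is linear in u.  Then Θ(u) and
Θ(v) are of the same type. -/
theorem stmt13 (u v : List ℕ) (hst : SameType u v)
    (hlin : ∀ x, u.count x = 1 ↔ v.count x = 1)
    (hnon : ∀ x, 2 ≤ u.count x ↔ 2 ≤ v.count x)
    (Θ : ℕ → List ℕ) (hne : ∀ x, Θ x ≠ [])
    (hstar : ∀ x ∈ u, 2 ≤ (Θ x).toFinset.card → u.count x = 1) :
    SameType (u.flatMap Θ) (v.flatMap Θ) :=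
  stmt13_general u v hst hlin Θ hne hstar
end

section
/- Given a word u and a substitution Θ: A → A^+, there exists a sequence of variable-identifications E (each step renaming one variable to another) such that: (i) Θ(E(u)) has the same type as Θ(u), and (ii) for all variables x, y occurring in E(u), if Θ(x) and Θ(y) are powers of the same variable, then x = y. -/
/-- w is a (positive) power of the variable c. -/
def isPow (w : List ℕ) (c : ℕ) : Prop := ∃ m, 0 < m ∧ w = List.replicate m c

/-!
Call two words equivalent if they are equal or are powers of one common letter; this is an
equivalence relation because a nonempty power determines its letter. Pulling it back along `Θ`
and sending every variable to a fixed representative of its class changes each `Θ`-image only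
by the exponent of a one-letter block, so the type of `Θ(u)` is kept. Two representatives whose
`Θ`-images are powers of the same letter lie in the same class, hence coincide.
-/

lemma sameType_replicate_append {α : Type*} {s t : List α} {c : α} {m k : ℕ}
    (hm : 0 < m) (hk : 0 < k) (h : SameType s t) :
    SameType (List.replicate m c ++ s) (List.replicate k c ++ t) := by
  obtain ⟨L, hpos, hchain, rfl, rfl⟩ := h
  rcases L with _ | ⟨⟨b, p, q⟩, L⟩
  · exact ⟨[(c, m, k)], by simp [hm, hk], List.isChain_singleton _, by simp, by simp⟩
  by_cases hcb : c = b
  · subst hcb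
    have hpq := hpos (c, p, q) List.mem_cons_self
    refine ⟨(c, m + p, k + q) :: L, ?_, ?_, ?_, ?_⟩
    · simp only [List.mem_cons, forall_eq_or_imp] at hpos ⊢
      exact ⟨⟨by omega, by omega⟩, hpos.2⟩
    · rcases L with _ | ⟨r, L⟩
      · exact List.isChain_singleton _
      · exact List.isChain_cons_cons.2 (List.isChain_cons_cons.1 hchain)
    all_goals simp [← List.append_assoc]
  · refine ⟨(c, m, k) :: (b, p, q) :: L, ?_, hchain.cons (by simpa using hcb), by simp, by simp⟩
    simp only [List.mem_cons, forall_eq_or_imp] at hpos ⊢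
    exact ⟨⟨hm, hk⟩, hpos⟩

lemma sameType_append_left {α : Type*} {s t : List α} (w : List α) (h : SameType s t) :
    SameType (w ++ s) (w ++ t) := by
  induction w with
  | nil => simpa
  | cons a w ih => simpa using sameType_replicate_append one_pos one_pos ih

lemma isPow_unique {w : List ℕ} {c c' : ℕ} (h : isPow w c) (h' : isPow w c') : c = c' := by
  obtain ⟨m, hm, rfl⟩ := h
  obtain ⟨m', hm', he⟩ := h'
  exact List.eq_of_mem_replicate (he ▸ List.mem_replicate.2 ⟨hm.ne', rfl⟩)

def EqOrPowOfSameLetter (w w' : List ℕ) : Prop :=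
  w = w' ∨ ∃ c, isPow w c ∧ isPow w' c

lemma eqOrPowOfSameLetter_equivalence : Equivalence EqOrPowOfSameLetter where
  refl _ := Or.inl rfl
  symm := by
    rintro _ _ (rfl | ⟨c, h, h'⟩)
    exacts [Or.inl rfl, Or.inr ⟨c, h', h⟩]
  trans := by
    rintro _ _ _ (rfl | ⟨c, h₁, h₂⟩) (rfl | ⟨c', h₂', h₃⟩)
    · exact Or.inl rfl
    · exact Or.inr ⟨c', h₂', h₃⟩
    · exact Or.inr ⟨c, h₁, h₂⟩
    · exact Or.inr ⟨c, h₁, isPow_unique h₂' h₂ ▸ h₃⟩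

def eqOrPowOfSameLetterSetoid : Setoid (List ℕ) :=
  ⟨EqOrPowOfSameLetter, eqOrPowOfSameLetter_equivalence⟩

lemma sameType_flatMap {α : Type*} {f g : α → List ℕ} (u : List α)
    (h : ∀ x ∈ u, EqOrPowOfSameLetter (f x) (g x)) :
    SameType (u.flatMap f) (u.flatMap g) := by
  induction u with
  | nil => exact ⟨[], by simp, List.isChain_nil, by simp, by simp⟩
  | cons x u ih =>
    simp only [List.flatMap_cons]
    have ih := ih fun y hy => h y (List.mem_cons_of_mem x hy)
    rcases h x List.mem_cons_self with hfg | ⟨c, ⟨m, hm, hf⟩, ⟨k, hk, hg⟩⟩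
    · rw [hfg]
      exact sameType_append_left _ ih
    · rw [hf, hg]
      exact sameType_replicate_append hm hk ih

theorem stmt14_general (u : List ℕ) (Θ : ℕ → List ℕ) :
    ∃ E : ℕ → ℕ,
      SameType ((u.map E).flatMap Θ) (u.flatMap Θ) ∧
      ∀ x ∈ u.map E, ∀ y ∈ u.map E,
        (∃ c, isPow (Θ x) c ∧ isPow (Θ y) c) → x = y := by
  let s := eqOrPowOfSameLetterSetoid.comap Θ
  refine ⟨fun x => (⟦x⟧ : Quotient s).out, ?_, ?_⟩
  · rw [List.flatMap_map]
    exact sameType_flatMap u fun x _ => Quotient.mk_out (s := s) x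
  · simp only [List.mem_map]
    rintro _ ⟨x, -, rfl⟩ _ ⟨y, -, rfl⟩ hxy
    exact congrArg Quotient.out (Quotient.out_equiv_out.1 (Or.inr hxy))

/-- Given a word u and a substitution Θ into nonempty words, one can identify some
variables of u (via a renaming map E) so that Θ(E(u)) has the same type as Θ(u) and
distinct variables of E(u) have Θ-images that are not powers of the same variable. -/
theorem stmt14 (u : List ℕ) (Θ : ℕ → List ℕ) (hne : ∀ x, Θ x ≠ []) :
    ∃ E : ℕ → ℕ,
      SameType ((u.map E).flatMap Θ) (u.flatMap Θ) ∧
      ∀ x ∈ u.map E, ∀ y ∈ u.map E,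
        (∃ c, isPow (Θ x) c ∧ isPow (Θ y) c) → x = y :=
  stmt14_general u Θ
end

section
/- Let ℓ > 1 and let U be a word such that for every pair of distinct variables x, y in U, the projection U(x,y) has height at most ℓ. Let Θ be a substitution from variables to nonempty words satisfying: for all x, y occurring in u, if Θ(x) and Θ(y) are powers of the same variable then x = y. If Θ(u) = U, then for every pair of distinct variables x, y in u, the projection u(x,y) has height at most ℓ. -/
/-!
If `c ∈ Θ x` and `d ∈ Θ y` are distinct letters, then substituting `c` for `x` and `d` for `y`
in `u(x,y)` gives a word with the same islands, and it is a subword of `U(c,d)`; since deleting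
letters never increases the height, `height u(x,y) ≤ height U(c,d) ≤ ℓ`. Such letters exist
because `Θ x` and `Θ y` are not powers of one common letter.
-/

theorem height_le_of_sublist {α : Type*} [DecidableEq α] {s w : List α} (h : s.Sublist w) :
    height s ≤ height w :=
  (List.isChain_destutter _ s).length_le_length_destutter_ne ((List.destutter_sublist _ s).trans h)

theorem height_map_of_injOn {α β : Type*} [DecidableEq α] [DecidableEq β] {g : α → β}
    {l : List α} (hg : ∀ a ∈ l, ∀ b ∈ l, g a = g b → a = b) :
    height (l.map g) = height l := by
  rw [height, height, ← List.map_destutter fun a ha b hb => ⟨mt (hg a ha b hb), mt (congrArg g)⟩,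
    List.length_map]

theorem map_sublist_flatMap {α β : Type*} {l : List α} {f : α → List β} {g : α → β}
    (h : ∀ a ∈ l, g a ∈ f a) : (l.map g).Sublist (l.flatMap f) := by
  rw [List.map_eq_flatMap]
  exact List.Sublist.flatMap_right l fun a ha => List.singleton_sublist.mpr (h a ha)

theorem exists_mem_mem_ne_of_not_isPow {v w : List ℕ} (hv : v ≠ []) (hw : w ≠ [])
    (h : ¬ ∃ c, isPow v c ∧ isPow w c) : ∃ c ∈ v, ∃ d ∈ w, c ≠ d := by
  by_contra! H
  obtain ⟨b, hb⟩ := List.exists_mem_of_ne_nil w hw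
  have hv' : ∀ c ∈ v, c = b := fun c hc => H c hc b hb
  obtain ⟨a, ha⟩ := List.exists_mem_of_ne_nil v hv
  have hw' : ∀ d ∈ w, d = b := fun d hd => (H a ha d hd).symm.trans (hv' a ha)
  exact h ⟨b, ⟨v.length, List.length_pos_iff.mpr hv, List.eq_replicate_of_mem hv'⟩,
    ⟨w.length, List.length_pos_iff.mpr hw, List.eq_replicate_of_mem hw'⟩⟩

theorem height_proj_le_height_proj_flatMap {u : List ℕ} {Θ : ℕ → List ℕ} {x y c d : ℕ}
    (hxy : x ≠ y) (hcd : c ≠ d) (hc : c ∈ Θ x) (hd : d ∈ Θ y) :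
    height (proj u x y) ≤ height (proj (u.flatMap Θ) c d) := by
  set g : ℕ → ℕ := fun z => if z = x then c else d
  have hmem : ∀ z ∈ proj u x y, z = x ∨ z = y := by simp [proj]
  have hinj : ∀ a ∈ proj u x y, ∀ b ∈ proj u x y, g a = g b → a = b := by
    intro a ha b hb
    rcases hmem a ha with rfl | rfl <;> rcases hmem b hb with rfl | rfl <;>
      simp [g, hxy, hxy.symm, hcd, hcd.symm]
  have hsub : ((proj u x y).map g).Sublist (u.flatMap Θ) := by
    refine (map_sublist_flatMap fun z hz => ?_).trans (List.filter_sublist.flatMap Θ)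
    rcases hmem z hz with rfl | rfl <;> simpa [g, hxy.symm]
  have hfilter : ((proj u x y).map g).filter (fun z => z == c || z == d) = (proj u x y).map g :=
    List.filter_eq_self.mpr <| List.forall_mem_map.mpr fun z _ => by
      by_cases z = x <;> simp [g, *]
  calc height (proj u x y) = height ((proj u x y).map g) := (height_map_of_injOn hinj).symm
    _ ≤ height (proj (u.flatMap Θ) c d) := height_le_of_sublist (hfilter ▸ hsub.filter _)

theorem stmt15_general (ℓ : ℕ) (U u : List ℕ) (Θ : ℕ → List ℕ)
    (hne : ∀ x, Θ x ≠ [])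
    (hU : ∀ x y, x ∈ U → y ∈ U → x ≠ y → height (proj U x y) ≤ ℓ)
    (hpow : ∀ x ∈ u, ∀ y ∈ u, (∃ c, isPow (Θ x) c ∧ isPow (Θ y) c) → x = y)
    (hΘu : u.flatMap Θ = U) :
    ∀ x y, x ∈ u → y ∈ u → x ≠ y → height (proj u x y) ≤ ℓ := by
  intro x y hx hy hxy
  obtain ⟨c, hc, d, hd, hcd⟩ :=
    exists_mem_mem_ne_of_not_isPow (hne x) (hne y) (mt (hpow x hx y hy) hxy)
  subst hΘu
  exact (height_proj_le_height_proj_flatMap hxy hcd hc hd).trans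
    (hU c d (List.mem_flatMap.mpr ⟨x, hx, hc⟩) (List.mem_flatMap.mpr ⟨y, hy, hd⟩) hcd)

/-- Let ℓ > 1 and U a word all of whose two-variable projections U(x,y) have height
at most ℓ.  Let Θ be a substitution into nonempty words such that distinct variables
of u never have images that are powers of the same variable.  If Θ(u) = U then all
two-variable projections u(x,y) also have height at most ℓ. -/
theorem stmt15 (ℓ : ℕ) (hℓ : 1 < ℓ) (U u : List ℕ) (Θ : ℕ → List ℕ)
    (hne : ∀ x, Θ x ≠ [])
    (hU : ∀ x y, x ∈ U → y ∈ U → x ≠ y → height (proj U x y) ≤ ℓ)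
    (hpow : ∀ x ∈ u, ∀ y ∈ u, (∃ c, isPow (Θ x) c ∧ isPow (Θ y) c) → x = y)
    (hΘu : u.flatMap Θ = U) :
    ∀ x y, x ∈ u → y ∈ u → x ≠ y → height (proj u x y) ≤ ℓ :=
  stmt15_general ℓ U u Θ hne hU hpow hΘu
end

section
/- Let τ be an equivalence relation on the free semigroup A^+ and S a semigroup. Suppose for infinitely many n, S satisfies an identity U_n ≈ V_n in at least n variables with U_n and V_n not τ-related, and suppose that for every identity u ≈ v of S in fewer than n variables, every word U with U τ U_n, and every substitution Θ: A → A^+ with Θ(u) = U, we have U τ Θ(v). Then S is non-finitely based: no finite set of identities of S entails all identities of S. -/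
/-- The value of a nonempty word under a substitution of semigroup elements for
variables (`none` for the empty word). -/
def evalS {S : Type*} [Semigroup S] (θ : ℕ → S) : List ℕ → Option S
  | [] => none
  | x :: xs => some (xs.foldl (fun s y => s * θ y) (θ x))

/-- The semigroup S satisfies the identity u ≈ v. -/
def SatS (S : Type*) [Semigroup S] (u v : List ℕ) : Prop :=
  ∀ θ : ℕ → S, evalS θ u = evalS θ v

/-- One step of equational deduction from a set E of identities: replace, inside a
context, a substitution instance of one side of an identity of E by the
corresponding instance of the other side. -/
def Step (E : Set (List ℕ × List ℕ)) (w w' : List ℕ) : Prop :=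
  ∃ (p q : List ℕ) (Θ : ℕ → List ℕ) (s t : List ℕ),
    ((s, t) ∈ E ∨ (t, s) ∈ E) ∧ (∀ x, Θ x ≠ []) ∧
    w = p ++ s.flatMap Θ ++ q ∧ w' = p ++ t.flatMap Θ ++ q

/-- The identity u ≈ v is a consequence of the set E of identities. -/
def Derivable (E : Set (List ℕ × List ℕ)) (u v : List ℕ) : Prop :=
  Relation.ReflTransGen (Step E) u v

lemma foldl_mul' {S : Type*} [Semigroup S] (θ : ℕ → S) (a b : S) (l : List ℕ) :
    l.foldl (fun s y => s * θ y) (a * b) = a * l.foldl (fun s y => s * θ y) b := by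
  induction l generalizing b with
  | nil => rfl
  | cons z zs ih => simp only [List.foldl_cons, mul_assoc, ih]

lemma evalS_cons' {S : Type*} [Semigroup S] (θ : ℕ → S) (x : ℕ) (s : List ℕ) (hs : s ≠ []) :
    evalS θ (x :: s) = (evalS θ s).map (fun g => θ x * g) := by
  cases s with
  | nil => exact absurd rfl hs
  | cons z zs => simp [evalS, foldl_mul']

lemma evalS_concat' {S : Type*} [Semigroup S] (θ : ℕ → S) (s : List ℕ) (hs : s ≠ []) (y : ℕ) :
    evalS θ (s ++ [y]) = (evalS θ s).map (fun g => g * θ y) := by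
  cases s with
  | nil => exact absurd rfl hs
  | cons z zs => simp [evalS, List.foldl_append]

lemma SatS.cons' {S : Type*} [Semigroup S] {s t : List ℕ} (hs : s ≠ []) (ht : t ≠ [])
    (h : SatS S s t) (x : ℕ) : SatS S (x :: s) (x :: t) := by
  intro θ; rw [evalS_cons' θ x s hs, evalS_cons' θ x t ht, h θ]

lemma SatS.concat' {S : Type*} [Semigroup S] {s t : List ℕ} (hs : s ≠ []) (ht : t ≠ [])
    (h : SatS S s t) (y : ℕ) : SatS S (s ++ [y]) (t ++ [y]) := by
  intro θ; rw [evalS_concat' θ s hs, evalS_concat' θ t ht, h θ]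

lemma flatMap_congr' (Θ Θ' : ℕ → List ℕ) :
    ∀ s : List ℕ, (∀ z ∈ s, Θ z = Θ' z) → s.flatMap Θ = s.flatMap Θ'
  | [], _ => rfl
  | z :: zs, h => by
      simp only [List.flatMap_cons, h z (by simp),
        flatMap_congr' Θ Θ' zs (fun w hw => h w (by simp [hw]))]

lemma flatMap_ne_nil' (Θ : ℕ → List ℕ) (hΘ : ∀ x, Θ x ≠ []) {s : List ℕ} (hs : s ≠ []) :
    s.flatMap Θ ≠ [] := by
  cases s with
  | nil => exact absurd rfl hs
  | cons z zs => simp [List.flatMap_cons, hΘ z]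

lemma card_le_of_sub_ins {F G : Finset ℕ} {x y : ℕ} (h : F ⊆ insert x (insert y G)) :
    F.card ≤ G.card + 2 := by
  have h1 := Finset.card_le_card h
  have h2 := Finset.card_insert_le x (insert y G)
  have h3 := Finset.card_insert_le y G
  omega

lemma wrap (S : Type*) [Semigroup S] (s t p q : List ℕ) (Θ : ℕ → List ℕ)
    (hs : s ≠ []) (ht : t ≠ []) (hsat : SatS S s t) (hΘ : ∀ x, Θ x ≠ []) :
    ∃ (u v : List ℕ) (Θ' : ℕ → List ℕ), u ≠ [] ∧ v ≠ [] ∧ SatS S u v ∧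
      (u ++ v).toFinset.card ≤ (s ++ t).toFinset.card + 2 ∧ (∀ x, Θ' x ≠ []) ∧
      u.flatMap Θ' = p ++ s.flatMap Θ ++ q ∧ v.flatMap Θ' = p ++ t.flatMap Θ ++ q := by
  obtain ⟨x, hx⟩ := Infinite.exists_notMem_finset ((s ++ t).toFinset)
  obtain ⟨y, hy⟩ := Infinite.exists_notMem_finset (insert x ((s ++ t).toFinset))
  have hxs : x ∉ s := fun h => hx (by simp [h])
  have hxt : x ∉ t := fun h => hx (by simp [h])
  have hys : y ∉ s := fun h => hy (by simp [h])
  have hyt : y ∉ t := fun h => hy (by simp [h])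
  have hxy : x ≠ y := fun h => hy (by simp [h])
  rcases eq_or_ne p [] with hp | hp <;> rcases eq_or_ne q [] with hq | hq
  · exact ⟨s, t, Θ, hs, ht, hsat, by simp, hΘ, by simp [hp, hq], by simp [hp, hq]⟩
  · -- p = [], q ≠ []
    set Θ' := Function.update Θ y q with hΘ'def
    have hes : ∀ z ∈ s, Θ' z = Θ z := by
      intro z hz
      exact Function.update_of_ne (by rintro rfl; exact hys hz) _ _
    have het : ∀ z ∈ t, Θ' z = Θ z := by
      intro z hz
      exact Function.update_of_ne (by rintro rfl; exact hyt hz) _ _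
    refine ⟨s ++ [y], t ++ [y], Θ', by simp, by simp, hsat.concat' hs ht y, ?_, ?_, ?_, ?_⟩
    · apply card_le_of_sub_ins (y := y)
      intro z hz
      simp only [List.toFinset_append, List.mem_toFinset, Finset.mem_union,
        List.mem_append, List.mem_singleton, Finset.mem_insert] at hz ⊢
      tauto
    · intro z
      rcases eq_or_ne z y with rfl | hz
      · simpa [hΘ'def] using hq
      · simpa [hΘ'def, Function.update_of_ne hz] using hΘ z
    · rw [List.flatMap_append, flatMap_congr' Θ' Θ s hes]
      simp [hp, hΘ'def]
    · rw [List.flatMap_append, flatMap_congr' Θ' Θ t het]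
      simp [hp, hΘ'def]
  · -- p ≠ [], q = []
    set Θ' := Function.update Θ x p with hΘ'def
    have hes : ∀ z ∈ s, Θ' z = Θ z := by
      intro z hz
      exact Function.update_of_ne (by rintro rfl; exact hxs hz) _ _
    have het : ∀ z ∈ t, Θ' z = Θ z := by
      intro z hz
      exact Function.update_of_ne (by rintro rfl; exact hxt hz) _ _
    refine ⟨x :: s, x :: t, Θ', by simp, by simp, hsat.cons' hs ht x, ?_, ?_, ?_, ?_⟩
    · apply card_le_of_sub_ins (y := y)
      intro z hz
      simp only [List.toFinset_append, List.mem_toFinset, Finset.mem_union,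
        List.mem_cons, Finset.mem_insert] at hz ⊢
      tauto
    · intro z
      rcases eq_or_ne z x with rfl | hz
      · simpa [hΘ'def] using hp
      · simpa [hΘ'def, Function.update_of_ne hz] using hΘ z
    · rw [List.flatMap_cons, flatMap_congr' Θ' Θ s hes]
      simp [hq, hΘ'def]
    · rw [List.flatMap_cons, flatMap_congr' Θ' Θ t het]
      simp [hq, hΘ'def]
  · -- p ≠ [], q ≠ []
    set Θ' := Function.update (Function.update Θ y q) x p with hΘ'def
    have hes : ∀ z ∈ s, Θ' z = Θ z := by
      intro z hz
      rw [hΘ'def, Function.update_of_ne (by rintro rfl; exact hxs hz),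
        Function.update_of_ne (by rintro rfl; exact hys hz)]
    have het : ∀ z ∈ t, Θ' z = Θ z := by
      intro z hz
      rw [hΘ'def, Function.update_of_ne (by rintro rfl; exact hxt hz),
        Function.update_of_ne (by rintro rfl; exact hyt hz)]
    have hx' : Θ' x = p := by rw [hΘ'def]; simp
    have hy' : Θ' y = q := by
      rw [hΘ'def, Function.update_of_ne (Ne.symm hxy)]; simp
    refine ⟨x :: (s ++ [y]), x :: (t ++ [y]), Θ', by simp, by simp,
      (hsat.concat' hs ht y).cons' (by simp) (by simp) x, ?_, ?_, ?_, ?_⟩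
    · apply card_le_of_sub_ins (x := x) (y := y)
      intro z hz
      simp only [List.toFinset_append, List.mem_toFinset, Finset.mem_union,
        List.mem_cons, List.mem_append, List.mem_singleton, Finset.mem_insert] at hz ⊢
      tauto
    · intro z
      rcases eq_or_ne z x with rfl | hzx
      · simpa [hx'] using hp
      rcases eq_or_ne z y with rfl | hzy
      · simpa [hy'] using hq
      · have : Θ' z = Θ z := by
          rw [hΘ'def, Function.update_of_ne hzx, Function.update_of_ne hzy]
        simpa [this] using hΘ z
    · rw [List.flatMap_cons, List.flatMap_append, flatMap_congr' Θ' Θ s hes]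
      simp [hx', hy', List.append_assoc]
    · rw [List.flatMap_cons, List.flatMap_append, flatMap_congr' Θ' Θ t het]
      simp [hx', hy', List.append_assoc]

/-- Let τ be an equivalence relation on words and S a semigroup.  Suppose that for
infinitely many n, S satisfies an identity Uₙ ≈ Vₙ in at least n variables with Uₙ
and Vₙ not τ-related, and that for every identity u ≈ v of S in fewer than n
variables, every word W with W τ Uₙ and every substitution Θ with Θ(u) = W we have
W τ Θ(v).  Then S is non-finitely based: no finite set of identities of S entails
all identities of S. -/

theorem stmt16 (S : Type*) [Semigroup S] (τ : List ℕ → List ℕ → Prop)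
    (hτ : Equivalence τ)
    (U V : ℕ → List ℕ) (N : Set ℕ) (hN : N.Infinite)
    (hUV : ∀ n ∈ N, U n ≠ [] ∧ V n ≠ [] ∧ SatS S (U n) (V n) ∧
      n ≤ ((U n ++ V n).toFinset.card) ∧ ¬ τ (U n) (V n))
    (hkey : ∀ n ∈ N, ∀ u v : List ℕ, u ≠ [] → v ≠ [] → SatS S u v →
      (u ++ v).toFinset.card < n → ∀ W, τ W (U n) →
      ∀ Θ : ℕ → List ℕ, (∀ x, Θ x ≠ []) → u.flatMap Θ = W → τ W (v.flatMap Θ)) :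
    ¬ ∃ B : Finset (List ℕ × List ℕ),
      (∀ p ∈ B, p.1 ≠ [] ∧ p.2 ≠ [] ∧ SatS S p.1 p.2) ∧
      (∀ u v : List ℕ, u ≠ [] → v ≠ [] → SatS S u v → Derivable (↑B) u v) := by
  rintro ⟨B, hB, hder⟩
  set K := B.sup (fun p => (p.1 ++ p.2).toFinset.card) with hK
  obtain ⟨n, hn, hnK⟩ := hN.exists_gt (K + 2)
  obtain ⟨hU, hV, hsatUV, hcard, hτUV⟩ := hUV n hn
  have hD : Derivable (↑B) (U n) (V n) := hder (U n) (V n) hU hV hsatUV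
  have inv : ∀ W, Derivable (↑B) (U n) W → τ W (U n) := by
    intro W h
    induction h with
    | refl => exact hτ.refl _
    | @tail b c _ step ih =>
      obtain ⟨p, q, Θ, s, t, hst, hΘ, hb, hc⟩ := step
      have hsst : s ≠ [] ∧ t ≠ [] ∧ SatS S s t ∧ (s ++ t).toFinset.card ≤ K := by
        rcases hst with h' | h'
        · rw [Finset.mem_coe] at h'
          obtain ⟨h1, h2, h3⟩ := hB _ h'
          exact ⟨h1, h2, h3, Finset.le_sup (f := fun p => (p.1 ++ p.2).toFinset.card) h'⟩
        · rw [Finset.mem_coe] at h'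
          obtain ⟨h1, h2, h3⟩ := hB _ h'
          refine ⟨h2, h1, fun θ => (h3 θ).symm, ?_⟩
          have hle := Finset.le_sup (f := fun p => (p.1 ++ p.2).toFinset.card) h'
          have : (s ++ t).toFinset = (t ++ s).toFinset := by
            simp [List.toFinset_append, Finset.union_comm]
          rw [this]
          exact hle
      obtain ⟨hs, ht, hsat, hcardst⟩ := hsst
      obtain ⟨u, v, Θ', hu, hv, hsat', hcard', hΘ', hfu, hfv⟩ :=
        wrap S s t p q Θ hs ht hsat hΘ
      have hlt : (u ++ v).toFinset.card < n := by omega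
      have key := hkey n hn u v hu hv hsat' hlt b ih Θ' hΘ' (hfu.trans hb.symm)
      have hbc : τ b c := by rw [hc, ← hfv]; exact key
      exact hτ.trans (hτ.symm hbc) ih
  exact hτUV (hτ.symm (inv (V n) hD))
end

section
/- For n > 3, let J_n = (x_1 x_{1+n} ··· x_{1+n²−n})(x_2 x_{2+n} ··· x_{2+n²−n})···(x_n x_{2n} ··· x_{n²}) and let U be any word of the same type as U_n = x_1 x_2 ··· x_{n²} · J_n · x_{n²} ··· x_2 x_1. Then for each pair of distinct indices 1 ≤ i ≠ j ≤ n², the two-letter word x_i x_j appears at most once as a factor of U. -/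
/-- The Jackson word J_n = (x₁x_{1+n}⋯x_{1+n²−n})(x₂x_{2+n}⋯x_{2+n²−n})⋯(x_nx_{2n}⋯x_{n²}),
with the variable x_i encoded as the natural number i. -/
def Jword (n : ℕ) : List ℕ :=
  (List.range n).flatMap (fun i => (List.range n).map (fun j => i + 1 + j * n))

/-- The word x₁x₂⋯x_{n²}. -/
def ascWord (n : ℕ) : List ℕ := (List.range (n ^ 2)).map (· + 1)

/-- The word U_n = x₁x₂⋯x_{n²} · J_n · x_{n²}⋯x₂x₁. -/
def Uword (n : ℕ) : List ℕ := ascWord n ++ Jword n ++ (ascWord n).reverse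

/-!
An occurrence of the factor `x_i x_j` is an occurrence of `(i, j)` in `List.consecutivePairs`.
For `i ≠ j` such pairs only arise at the boundary of two blocks, so their number is the same
for all words of one type, and it suffices to show that no pair occurs twice in `U_n` itself.
The three pieces `x₁⋯x_{n²}`, `J_n` and `x_{n²}⋯x₁` have no repeated letters, and their adjacent
pairs `(a, b)` satisfy `b = a + 1`, `b = a + n ∨ a + n + 1 = b + n²` and `a = b + 1` respectively;
for `n ≥ 3` these relations and the two junction pairs `(n², 1)`, `(n², n²)` exclude each other.
-/

namespace List

variable {α : Type*}

@[simp] theorem consecutivePairs_nil : ([] : List α).consecutivePairs = [] := rfl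

@[simp] theorem consecutivePairs_singleton (a : α) : [a].consecutivePairs = [] := rfl

@[simp] theorem consecutivePairs_cons_cons (a b : α) (l : List α) :
    (a :: b :: l).consecutivePairs = (a, b) :: (b :: l).consecutivePairs := rfl

theorem consecutivePairs_append_cons (l : List α) (a : α) (r : List α) :
    (l ++ a :: r).consecutivePairs = (l ++ [a]).consecutivePairs ++ (a :: r).consecutivePairs := by
  induction l with
  | nil => simp
  | cons b l ih =>
    cases l with
    | nil => simp
    | cons c l =>
      simp only [cons_append] at ih ⊢
      rw [consecutivePairs_cons_cons, ih]
      rfl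

theorem consecutivePairs_append_of_getLast?_of_head? {l r : List α} {a b : α} (hl : l.getLast? = some a)
    (hr : r.head? = some b) :
    (l ++ r).consecutivePairs = l.consecutivePairs ++ (a, b) :: r.consecutivePairs := by
  obtain ⟨l, rfl⟩ := getLast?_eq_some_iff.mp hl
  obtain ⟨r, rfl⟩ := head?_eq_some_iff.mp hr
  rw [append_assoc, singleton_append, consecutivePairs_append_cons]
  rfl

theorem IsChain.rel_of_mem_consecutivePairs {R : α → α → Prop} {l : List α} (hl : l.IsChain R)
    {a b : α} (h : (a, b) ∈ l.consecutivePairs) : R a b := by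
  induction l with
  | nil => simp at h
  | cons c l ih =>
    cases l with
    | nil => simp at h
    | cons d l =>
      rw [isChain_cons_cons] at hl
      rcases mem_cons.mp h with h | h
      · cases h; exact hl.1
      · exact ih hl.2 h

theorem Nodup.consecutivePairs {l : List α} (hl : l.Nodup) : l.consecutivePairs.Nodup :=
  .of_map Prod.snd <| by
    rw [map_snd_zip (by simp)]
    exact hl.sublist (tail_sublist l)

end List

open List

section Counting

variable {α : Type*} [DecidableEq α] {x y : α}

theorem count_consecutivePairs_append_cons_le (l r : List α) (a : α) (p : α × α) :
    (a :: r).consecutivePairs.count p ≤ (l ++ a :: r).consecutivePairs.count p := by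
  rw [consecutivePairs_append_cons, count_append]
  omega

theorem count_consecutivePairs_append_cons_cons_self (hxy : x ≠ y) (l r : List α) (a : α) :
    (l ++ a :: a :: r).consecutivePairs.count (x, y) =
      (l ++ a :: r).consecutivePairs.count (x, y) := by
  have : (a, a) ≠ (x, y) := fun h => hxy (by cases h; rfl)
  rw [consecutivePairs_append_cons, consecutivePairs_append_cons l a r,
    consecutivePairs_cons_cons, count_append, count_append, count_cons_of_ne this]

theorem count_consecutivePairs_append_replicate (hxy : x ≠ y) (l r : List α) (a : α) (k : ℕ) :
    (l ++ a :: (replicate k a ++ r)).consecutivePairs.count (x, y) =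
      (l ++ a :: r).consecutivePairs.count (x, y) := by
  induction k with
  | zero => rfl
  | succ k ih => rw [replicate_succ, cons_append, count_consecutivePairs_append_cons_cons_self hxy, ih]

theorem count_consecutivePairs_append_flatMap_replicate (hxy : x ≠ y) {β : Type*} (f : β → α)
    (e : β → ℕ) (L : List β) (he : ∀ b ∈ L, 0 < e b) (l : List α) :
    (l ++ L.flatMap fun b => replicate (e b) (f b)).consecutivePairs.count (x, y) =
      (l ++ L.map f).consecutivePairs.count (x, y) := by
  induction L generalizing l with
  | nil => simp
  | cons b L ih =>
    obtain ⟨k, hk⟩ := Nat.exists_eq_add_one.mpr (he b mem_cons_self)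
    have ih' := ih (fun c hc => he c (mem_cons_of_mem b hc)) (l ++ [f b])
    rw [flatMap_cons, hk, replicate_succ, cons_append,
      count_consecutivePairs_append_replicate hxy, map_cons]
    simpa using ih'

theorem SameType.count_consecutivePairs_eq {u v : List α} (h : SameType u v) (hxy : x ≠ y) :
    u.consecutivePairs.count (x, y) = v.consecutivePairs.count (x, y) := by
  obtain ⟨L, hpos, -, rfl, rfl⟩ := h
  have h₁ := count_consecutivePairs_append_flatMap_replicate hxy Prod.fst (fun p => p.2.1) L
    (fun p hp => (hpos p hp).1) []
  have h₂ := count_consecutivePairs_append_flatMap_replicate hxy Prod.fst (fun p => p.2.2) L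
    (fun p hp => (hpos p hp).2) []
  simp only [nil_append] at h₁ h₂
  rw [h₁, h₂]

end Counting

section Occurrences

variable {α : Type*} [DecidableEq α]

theorem two_le_count_consecutivePairs_of_append {p q r s : List α} {a b : α} (hs : s ≠ [])
    (h : a :: b :: q = s ++ a :: b :: r) :
    2 ≤ (p ++ a :: b :: q).consecutivePairs.count (a, b) := by
  obtain ⟨c, s, rfl⟩ := exists_cons_of_ne_nil hs
  have hq : b :: q = s ++ a :: b :: r := (cons_eq_cons.mp h).2
  calc 2 ≤ (a :: b :: q).consecutivePairs.count (a, b) := by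
        rw [consecutivePairs_cons_cons, count_cons_self, hq]
        have := count_consecutivePairs_append_cons_le s (b :: r) a (a, b)
        simp only [consecutivePairs_cons_cons, count_cons_self] at this
        omega
    _ ≤ _ := count_consecutivePairs_append_cons_le p (b :: q) a (a, b)

theorem two_le_count_consecutivePairs {p q p' q' : List α} {a b : α}
    (h : p ++ a :: b :: q = p' ++ a :: b :: q') (hne : p ≠ p') :
    2 ≤ (p ++ a :: b :: q).consecutivePairs.count (a, b) := by
  rcases append_eq_append_iff.mp h with ⟨s, rfl, hs⟩ | ⟨s, rfl, hs⟩
  · exact two_le_count_consecutivePairs_of_append (by rintro rfl; simp at hne) hs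
  · rw [h]
    exact two_le_count_consecutivePairs_of_append (by rintro rfl; simp at hne) hs

end Occurrences

section Jackson

theorem ascWord_nodup (n : ℕ) : (ascWord n).Nodup :=
  nodup_range.map (add_left_injective 1)

theorem ascWord_isChain (n : ℕ) : (ascWord n).IsChain fun a b => b = a + 1 := by
  rw [ascWord, isChain_map, isChain_range]
  exact fun _ _ => rfl

theorem ascWord_getLast? {n : ℕ} (hn : 0 < n) : (ascWord n).getLast? = some (n ^ 2) := by
  have : n ^ 2 ≠ 0 := by positivity
  simp only [ascWord, getLast?_map, getLast?_range, if_neg this, Option.map_some]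
  congr 1
  omega

theorem Jword_nodup {n : ℕ} (hn : 0 < n) : (Jword n).Nodup := by
  refine nodup_flatMap.mpr ⟨fun c _ => nodup_range.map fun r r' h => ?_,
    nodup_range.pairwise_of_forall_ne fun c hc c' hc' hne => ?_⟩
  · simpa [hn.ne'] using h
  · simp only [Function.onFun, disjoint_left, mem_map, mem_range, not_exists, not_and]
    rintro _ ⟨r, -, rfl⟩ r' - h
    have := congrArg (· % n) (show c' + r' * n = c + r * n by omega)
    simp only [Nat.add_mul_mod_self_right, Nat.mod_eq_of_lt (mem_range.mp hc),
      Nat.mod_eq_of_lt (mem_range.mp hc')] at this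
    exact hne this.symm

theorem Jword_isChain {n : ℕ} (hn : 0 < n) :
    (Jword n).IsChain fun a b => b = a + n ∨ a + n + 1 = b + n ^ 2 := by
  rw [Jword, flatMap_def, isChain_flatten (by simp [hn.ne'])]
  refine ⟨?_, ?_⟩
  · simp only [mem_map, mem_range, forall_exists_index, and_imp]
    rintro _ c - rfl
    rw [isChain_map, isChain_range]
    intro r _
    left
    rw [Nat.succ_eq_add_one]
    ring
  · obtain ⟨k, rfl⟩ := Nat.exists_eq_add_one.mpr hn
    rw [isChain_map, isChain_range]
    intro c _
    have h : c + 1 + k * (k + 1) + (k + 1) + 1 = c + 1 + 1 + (k + 1) ^ 2 := by ring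
    simp [getLast?_range, head?_range, h]

theorem Jword_head? {n : ℕ} (hn : 0 < n) : (Jword n).head? = some 1 := by
  obtain ⟨k, rfl⟩ := Nat.exists_eq_add_one.mpr hn
  simp [Jword, range_succ_eq_map]

theorem Jword_getLast? {n : ℕ} (hn : 0 < n) : (Jword n).getLast? = some (n ^ 2) := by
  obtain ⟨k, rfl⟩ := Nat.exists_eq_add_one.mpr hn
  rw [show (k + 1) ^ 2 = k + 1 + k * (k + 1) by ring]
  simp [Jword, range_succ, getLast?_range]

theorem consecutivePairs_Uword {n : ℕ} (hn : 0 < n) :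
    (Uword n).consecutivePairs =
      ((ascWord n).consecutivePairs ++ (n ^ 2, 1) :: (Jword n).consecutivePairs) ++
        (n ^ 2, n ^ 2) :: (ascWord n).reverse.consecutivePairs := by
  rw [Uword, consecutivePairs_append_of_getLast?_of_head? (a := n ^ 2) (b := n ^ 2)
      (by rw [getLast?_append, Jword_getLast? hn]; rfl) (by rw [head?_reverse, ascWord_getLast? hn]),
    consecutivePairs_append_of_getLast?_of_head? (ascWord_getLast? hn) (Jword_head? hn)]

end Jackson

theorem Uword_consecutivePairs_nodup {n : ℕ} (hn : 3 ≤ n) : (Uword n).consecutivePairs.Nodup := by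
  refine nodup_iff_count_le_one.mpr fun ⟨i, j⟩ => ?_
  have hn0 : 0 < n := by omega
  have hsq : 3 * n ≤ n ^ 2 := by nlinarith
  have piece {R : ℕ → ℕ → Prop} {l : List ℕ} (hnd : l.Nodup) (hR : l.IsChain R) :
      l.consecutivePairs.count (i, j) ≤ 1 ∧ (0 < l.consecutivePairs.count (i, j) → R i j) :=
    ⟨nodup_iff_count_le_one.mp hnd.consecutivePairs _,
      fun h => hR.rel_of_mem_consecutivePairs (count_pos_iff.mp h)⟩
  have hA := piece (ascWord_nodup n) (ascWord_isChain n)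
  have hJ := piece (Jword_nodup hn0) (Jword_isChain hn0)
  have hR := piece (nodup_reverse.mpr (ascWord_nodup n))
    ((isChain_reverse (R := fun a b => a = b + 1)).mpr (ascWord_isChain n))
  rw [consecutivePairs_Uword hn0]
  simp only [count_append, count_cons, beq_iff_eq, Prod.mk.injEq]
  split_ifs <;> omega

theorem stmt17_general (n : ℕ) (hn : 3 < n) (U : List ℕ) (hU : SameType U (Uword n))
    (i j : ℕ) (hij : i ≠ j) :
    ∀ p q p' q' : List ℕ,
      U = p ++ i :: j :: q → U = p' ++ i :: j :: q' → p = p' := by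
  intro p q p' q' h h'
  by_contra hne
  have htwo := two_le_count_consecutivePairs (h.symm.trans h') hne
  rw [← h, hU.count_consecutivePairs_eq hij] at htwo
  have := nodup_iff_count_le_one.mp (Uword_consecutivePairs_nodup hn.le) (i, j)
  omega

/-- (P1) For n > 3, in any word U of the same type as U_n, each two-letter word
x_i x_j (i ≠ j) appears at most once as a factor of U. -/
theorem stmt17 (n : ℕ) (hn : 3 < n) (U : List ℕ) (hU : SameType U (Uword n))
    (i j : ℕ) (hi : 1 ≤ i) (hi' : i ≤ n ^ 2) (hj : 1 ≤ j) (hj' : j ≤ n ^ 2)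
    (hij : i ≠ j) :
    ∀ p q p' q' : List ℕ,
      U = p ++ i :: j :: q → U = p' ++ i :: j :: q' → p = p' :=
  stmt17_general n hn U hU i j hij
end
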